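/- arXiv:2404.06937 — 6 statements merged into one kernel-verified Lean document; each statement's English description precedes it below -/
import Mathlib

section
/- Let ω₁ ∈ ℝ with ω₁ ∉ ℤ. Then ∫₀^{2π} ∫₀^{t₁} e^{-iω₁ t₁ - i t₂} dt₂ dt₁ = -(2 sin²(π ω₁) + i sin(2π ω₁)) / (ω₁(ω₁ + 1)), and this quantity is nonzero. -/
open Complex Real intervalIntegral

theorem stmt_4 (ω₁ : ℝ) (hω : ∀ n : ℤ, ω₁ ≠ (n : ℝ)) :
    (∫ t₁ in (0:ℝ)..(2*π), ∫ t₂ in (0:ℝ)..t₁, Complex.exp (-I * ω₁ * t₁ - I * t₂))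
      = -((2 * Real.sin (π * ω₁)^2 + I * Real.sin (2 * π * ω₁)) / (ω₁ * (ω₁ + 1))) ∧
    (∫ t₁ in (0:ℝ)..(2*π), ∫ t₂ in (0:ℝ)..t₁, Complex.exp (-I * ω₁ * t₁ - I * t₂)) ≠ 0 := by
  have hr0 : ω₁ ≠ 0 := by simpa using hω 0
  have hω0 : (ω₁ : ℂ) ≠ 0 := Complex.ofReal_ne_zero.mpr hr0
  have hω1 : (ω₁ : ℂ) + 1 ≠ 0 := by
    intro h
    apply hω (-1)
    have : (ω₁ : ℂ) = ((-1 : ℝ) : ℂ) := by push_cast; linear_combination h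
    exact_mod_cast this
  have hc1 : (-I * ((ω₁ : ℂ) + 1)) ≠ 0 := by
    simp [Complex.I_ne_zero, hω1]
  have hc2 : (-I * (ω₁ : ℂ)) ≠ 0 := by
    simp [Complex.I_ne_zero, hω0]
  -- inner integral
  have h1 : ∀ t₁ : ℝ, (∫ t₂ in (0:ℝ)..t₁, Complex.exp (-I * ω₁ * t₁ - I * t₂))
      = I * Complex.exp ((-I * ((ω₁:ℂ)+1)) * t₁) - I * Complex.exp ((-I * (ω₁:ℂ)) * t₁) := by
    intro t₁
    have e1 : ∀ t₂ : ℝ, (-I * ω₁ * t₁ - I * t₂ : ℂ)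
        = (-I * ω₁ * t₁) + (-I) * (t₂ : ℂ) := by intro t₂; ring
    simp_rw [e1, Complex.exp_add, intervalIntegral.integral_const_mul,
      integral_exp_mul_complex (by simp [Complex.I_ne_zero] : (-I : ℂ) ≠ 0)]
    rw [show ((-I * ((ω₁:ℂ)+1)) * t₁ : ℂ) = (-I * ω₁ * t₁) + (-I) * (t₁:ℂ) by ring,
      Complex.exp_add]
    field_simp
    ring_nf
    simp only [Complex.I_sq, Complex.ofReal_zero, mul_zero, neg_zero, Complex.exp_zero]
    ring
  rw [intervalIntegral.integral_congr (fun t _ => h1 t)]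
  have int1 : IntervalIntegrable (fun t : ℝ => I * Complex.exp ((-I * ((ω₁:ℂ)+1)) * t))
      MeasureTheory.volume 0 (2*π) := by
    apply Continuous.intervalIntegrable
    continuity
  have int2 : IntervalIntegrable (fun t : ℝ => I * Complex.exp ((-I * (ω₁:ℂ)) * t))
      MeasureTheory.volume 0 (2*π) := by
    apply Continuous.intervalIntegrable
    continuity
  rw [intervalIntegral.integral_sub int1 int2, intervalIntegral.integral_const_mul,
    intervalIntegral.integral_const_mul, integral_exp_mul_complex hc1,
    integral_exp_mul_complex hc2]
  simp only [Complex.ofReal_mul, Complex.ofReal_ofNat, Complex.ofReal_zero, mul_zero,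
    Complex.exp_zero]
  have hE1 : Complex.exp ((-I * ((ω₁:ℂ)+1)) * (2*(π:ℂ))) = Complex.exp ((-I * (ω₁:ℂ)) * (2*(π:ℂ))) := by
    rw [show ((-I * ((ω₁:ℂ)+1)) * (2*(π:ℂ)) : ℂ) = (-I * (ω₁:ℂ)) * (2*(π:ℂ)) + (-1 : ℤ) * (2*π*I) by
      push_cast; ring, Complex.exp_add, Complex.exp_int_mul_two_pi_mul_I, mul_one]
  have hcos : Real.cos (2*π*ω₁) = 1 - 2 * Real.sin (π*ω₁)^2 := by
    rw [show (2*π*ω₁ : ℝ) = 2 * (π*ω₁) by ring, Real.cos_two_mul]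
    nlinarith [Real.sin_sq_add_cos_sq (π*ω₁)]
  have hE : Complex.exp ((-I * (ω₁:ℂ)) * (2*(π:ℂ))) - 1
      = -(2 * ((Real.sin (π * ω₁) : ℝ) : ℂ)^2 + I * ((Real.sin (2 * π * ω₁) : ℝ) : ℂ)) := by
    rw [show ((-I * (ω₁:ℂ)) * (2*(π:ℂ)) : ℂ) = ((-(2*π*ω₁) : ℝ) : ℂ) * I by push_cast; ring]
    have h : (-(2 * ((Real.sin (π*ω₁) : ℝ):ℂ)^2 + I * ((Real.sin (2*π*ω₁):ℝ):ℂ)))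
        = ((-(2*Real.sin (π*ω₁)^2) : ℝ) : ℂ) + ((-(Real.sin (2*π*ω₁)) : ℝ) : ℂ) * I := by
      push_cast; ring
    rw [h, Complex.ext_iff]
    constructor <;>
      simp only [Complex.sub_re, Complex.sub_im, Complex.add_re, Complex.add_im, Complex.one_re,
        Complex.one_im, Complex.exp_ofReal_mul_I_re, Complex.exp_ofReal_mul_I_im,
        Complex.ofReal_re, Complex.ofReal_im, Complex.mul_re, Complex.mul_im,
        Complex.I_re, Complex.I_im]
    · rw [Real.cos_neg, hcos]; ring
    · rw [Real.sin_neg]; ring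
  have key : ∀ z : ℂ, I*(z/(-I*((ω₁:ℂ)+1))) - I*(z/(-I*(ω₁:ℂ))) = z/((ω₁:ℂ)*((ω₁:ℂ)+1)) := by
    intro z
    field_simp
    ring_nf
  have hsin : Real.sin (π * ω₁) ≠ 0 := by
    intro hs
    rcases Real.sin_eq_zero_iff.mp hs with ⟨n, hn⟩
    apply hω n
    have h2 : π * (n : ℝ) = π * ω₁ := by linarith [hn]
    exact (mul_left_cancel₀ Real.pi_ne_zero h2).symm
  have hNum : (2 * ((Real.sin (π * ω₁) : ℝ) : ℂ)^2 + I * ((Real.sin (2 * π * ω₁) : ℝ) : ℂ)) ≠ 0 := by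
    intro h
    have hre := congrArg Complex.re h
    simp only [Complex.add_re, Complex.mul_re, Complex.mul_im, Complex.I_re, Complex.I_im,
      Complex.ofReal_re, Complex.ofReal_im, Complex.zero_re, Complex.re_ofNat,
      Complex.im_ofNat, ← Complex.ofReal_pow] at hre
    apply hsin
    nlinarith [sq_nonneg (Real.sin (π * ω₁)), hre]
  rw [hE1, hE, key, neg_div]
  refine ⟨rfl, ?_⟩
  exact neg_ne_zero.mpr (div_ne_zero hNum (mul_ne_zero hω0 hω1))
end

section
/- Let n ∈ ℤ with |n| ≥ 2, and let A, B ∈ ℝ with A² + B² ≠ 0. Then ∫₀^{2π} ∫₀^{t₁} e^{-i n t₁} e^{-i t₂} (A cos(n t₁) + B sin(n t₁)) (A cos(n t₂) + B sin(n t₂)) dt₂ dt₁ = (iA + B)(A - iBn) π / (n² - 1), and this quantity is nonzero. -/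
open Complex Real intervalIntegral

lemma exp_int_int (m : ℤ) (hm : m ≠ 0) :
    ∫ t in (0:ℝ)..(2*π), Complex.exp ((I * (m:ℂ)) * t) = 0 := by
  have hc : (I * (m:ℂ)) ≠ 0 := mul_ne_zero I_ne_zero (by exact_mod_cast hm)
  rw [integral_exp_mul_complex hc,
    show (I * (m:ℂ)) * ((2*π:ℝ):ℂ) = (m:ℂ) * (2 * (π:ℂ) * I) by push_cast; ring,
    Complex.exp_int_mul_two_pi_mul_I]
  simp

lemma cos_sin_expand (A B x : ℝ) :
    ((A:ℂ) * Real.cos x + B * Real.sin x) =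
      ((A:ℂ) - I*B)/2 * Complex.exp (I * x) + ((A:ℂ) + I*B)/2 * Complex.exp (-(I * x)) := by
  have h1 : Complex.exp (I * x) = (Real.cos x : ℂ) + (Real.sin x : ℂ) * I := by
    rw [mul_comm, Complex.exp_mul_I, Complex.ofReal_cos, Complex.ofReal_sin]
  have h2 : Complex.exp (-(I * x)) = (Real.cos x : ℂ) - (Real.sin x : ℂ) * I := by
    rw [show -(I * (x:ℂ)) = ((-x : ℝ):ℂ) * I by push_cast; ring, Complex.exp_mul_I,
      Complex.ofReal_cos, Complex.ofReal_sin]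
    push_cast
    rw [Complex.cos_neg, Complex.sin_neg]
    ring
  rw [h1, h2]; linear_combination (B:ℂ) * (Real.sin x:ℂ) * Complex.I_sq

lemma inner_calc (n : ℤ) (hn1 : n ≠ 1) (hn1' : n ≠ -1) (A B : ℝ) (t₁ : ℝ) :
    (∫ t₂ in (0:ℝ)..t₁, Complex.exp (-I * t₂) *
        ((A:ℂ) * Real.cos (n * t₂) + B * Real.sin (n * t₂)))
      = ((A:ℂ) - I*B)/2 * (Complex.exp ((I*((n:ℂ)-1)) * t₁) - 1)/(I*((n:ℂ)-1))
        + ((A:ℂ) + I*B)/2 * (Complex.exp ((I*(-(n:ℂ)-1)) * t₁) - 1)/(I*(-(n:ℂ)-1)) := by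
  have hc1 : (n:ℂ) - 1 ≠ 0 := sub_ne_zero.mpr (by exact_mod_cast hn1)
  have hc2 : -(n:ℂ) - 1 ≠ 0 := by
    intro h
    apply hn1'
    have : (n:ℂ) = -1 := by linear_combination -h
    exact_mod_cast this
  have hp : I * ((n:ℂ)-1) ≠ 0 := mul_ne_zero I_ne_zero hc1
  have hq : I * (-(n:ℂ)-1) ≠ 0 := mul_ne_zero I_ne_zero hc2
  rw [integral_congr (g := fun t : ℝ => ((A:ℂ) - I*B)/2 * Complex.exp ((I*((n:ℂ)-1)) * t)
      + ((A:ℂ) + I*B)/2 * Complex.exp ((I*(-(n:ℂ)-1)) * t)) ?_]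
  · rw [integral_add (Continuous.intervalIntegrable (by fun_prop) _ _)
        (Continuous.intervalIntegrable (by fun_prop) _ _),
      integral_const_mul, integral_const_mul,
      integral_exp_mul_complex hp, integral_exp_mul_complex hq]
    simp only [Complex.ofReal_zero, mul_zero, Complex.exp_zero]
    ring
  · intro t _
    simp only
    rw [cos_sin_expand A B ((n:ℝ)*t)]
    have e1 : Complex.exp (-I * t) * Complex.exp (I * (((n:ℝ)*t : ℝ):ℂ))
        = Complex.exp ((I*((n:ℂ)-1)) * t) := by
      rw [← Complex.exp_add]; congr 1; push_cast; ring
    have e2 : Complex.exp (-I * t) * Complex.exp (-(I * (((n:ℝ)*t : ℝ):ℂ)))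
        = Complex.exp ((I*(-(n:ℂ)-1)) * t) := by
      rw [← Complex.exp_add]; congr 1; push_cast; ring
    linear_combination (((A:ℂ) - I*B)/2) * e1 + (((A:ℂ) + I*B)/2) * e2

theorem stmt_7 (n : ℤ) (hn : 2 ≤ |n|) (A B : ℝ) (hAB : A^2 + B^2 ≠ 0) :
    (∫ t₁ in (0:ℝ)..(2*π), ∫ t₂ in (0:ℝ)..t₁,
        Complex.exp (-I * n * t₁) * Complex.exp (-I * t₂) *
          (A * Real.cos (n * t₁) + B * Real.sin (n * t₁)) *
          (A * Real.cos (n * t₂) + B * Real.sin (n * t₂)))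
      = (I * A + B) * (A - I * B * n) * π / ((n:ℂ)^2 - 1) ∧
    (∫ t₁ in (0:ℝ)..(2*π), ∫ t₂ in (0:ℝ)..t₁,
        Complex.exp (-I * n * t₁) * Complex.exp (-I * t₂) *
          (A * Real.cos (n * t₁) + B * Real.sin (n * t₁)) *
          (A * Real.cos (n * t₂) + B * Real.sin (n * t₂))) ≠ 0 := by
  have hn1 : n ≠ 1 := by rcases le_abs.mp hn with h | h <;> omega
  have hn1' : n ≠ -1 := by rcases le_abs.mp hn with h | h <;> omega
  have hn0 : n ≠ 0 := by rcases le_abs.mp hn with h | h <;> omega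
  have hc1 : (n:ℂ) - 1 ≠ 0 := sub_ne_zero.mpr (by exact_mod_cast hn1)
  have hc2 : -(n:ℂ) - 1 ≠ 0 := by
    intro h; apply hn1'
    have : (n:ℂ) = -1 := by linear_combination -h
    exact_mod_cast this
  have hp : I * ((n:ℂ)-1) ≠ 0 := mul_ne_zero I_ne_zero hc1
  have hq : I * (-(n:ℂ)-1) ≠ 0 := mul_ne_zero I_ne_zero hc2
  set c : ℂ := ((A:ℂ) - I*B)/2 with hc
  set d : ℂ := ((A:ℂ) + I*B)/2 with hd
  set p : ℂ := I * ((n:ℂ)-1) with hpd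
  set q : ℂ := I * (-(n:ℂ)-1) with hqd
  set r : ℂ := I * (-3*(n:ℂ)-1) with hrd
  set s : ℂ := I * (-2*(n:ℂ)) with hsd
  have key : (∫ t₁ in (0:ℝ)..(2*π), ∫ t₂ in (0:ℝ)..t₁,
        Complex.exp (-I * n * t₁) * Complex.exp (-I * t₂) *
          (A * Real.cos (n * t₁) + B * Real.sin (n * t₁)) *
          (A * Real.cos (n * t₂) + B * Real.sin (n * t₂)))
      = (I * A + B) * (A - I * B * n) * π / ((n:ℂ)^2 - 1) := by
    have step1 : (∫ t₁ in (0:ℝ)..(2*π), ∫ t₂ in (0:ℝ)..t₁,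
        Complex.exp (-I * n * t₁) * Complex.exp (-I * t₂) *
          (A * Real.cos (n * t₁) + B * Real.sin (n * t₁)) *
          (A * Real.cos (n * t₂) + B * Real.sin (n * t₂)))
        = ∫ t₁ in (0:ℝ)..(2*π),
            (c*c/p) * Complex.exp (p*t₁) + (c*d/q + d*c/p) * Complex.exp (q*t₁)
            + (d*d/q) * Complex.exp (r*t₁) + (-(d*c/p) - d*d/q) * Complex.exp (s*t₁)
            + (-(c*c/p) - c*d/q) := by
      apply integral_congr
      intro t ht
      simp only
      have inner1 : (∫ t₂ in (0:ℝ)..t, Complex.exp (-I * n * t) * Complex.exp (-I * t₂) *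
          (A * Real.cos (n * t) + B * Real.sin (n * t)) *
          (A * Real.cos (n * t₂) + B * Real.sin (n * t₂)))
          = (Complex.exp (-I * n * t) * ((A:ℂ) * Real.cos (n * t) + B * Real.sin (n * t))) *
            ∫ t₂ in (0:ℝ)..t, Complex.exp (-I * t₂) *
              ((A:ℂ) * Real.cos (n * t₂) + B * Real.sin (n * t₂)) := by
        rw [← integral_const_mul]
        apply integral_congr
        intro u _
        simp only
        ring
      rw [inner1, inner_calc n hn1 hn1' A B t, ← hc, ← hd, ← hpd, ← hqd,
        cos_sin_expand A B ((n:ℝ)*t), ← hc, ← hd]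
      have g0 : Complex.exp (-I * n * t) * Complex.exp (I * (((n:ℝ)*t : ℝ):ℂ)) = 1 := by
        rw [← Complex.exp_add, show -I * (n:ℂ) * (t:ℂ) + I * (((n:ℝ)*t : ℝ):ℂ) = 0 by push_cast; ring,
          Complex.exp_zero]
      have g4 : Complex.exp (-I * n * t) * Complex.exp (-(I * (((n:ℝ)*t : ℝ):ℂ)))
          = Complex.exp (s*t) := by
        rw [← Complex.exp_add]; congr 1; rw [hsd]; push_cast; ring
      have g1 : Complex.exp (s*t) * Complex.exp (p*t) = Complex.exp (q*t) := by
        rw [← Complex.exp_add]; congr 1; rw [hsd, hpd, hqd]; ring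
      have g2 : Complex.exp (s*t) * Complex.exp (q*t) = Complex.exp (r*t) := by
        rw [← Complex.exp_add]; congr 1; rw [hsd, hrd, hqd]; ring
      linear_combination (c*(Complex.exp (p*t) - 1)/p + d*(Complex.exp (q*t) - 1)/q) *
          (c * g0 + d * g4) + d*c/p * g1 + d*d/q * g2
    rw [step1]
    have hi1 : ∫ t in (0:ℝ)..(2*π), Complex.exp (p*t) = 0 := by
      have := exp_int_int (n-1) (by omega)
      rwa [show ((n-1:ℤ):ℂ) = (n:ℂ)-1 by push_cast; ring, ← hpd] at this
    have hi2 : ∫ t in (0:ℝ)..(2*π), Complex.exp (q*t) = 0 := by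
      have := exp_int_int (-n-1) (by omega)
      rwa [show ((-n-1:ℤ):ℂ) = -(n:ℂ)-1 by push_cast; ring, ← hqd] at this
    have hi3 : ∫ t in (0:ℝ)..(2*π), Complex.exp (r*t) = 0 := by
      have := exp_int_int (-3*n-1) (by omega)
      rwa [show ((-3*n-1:ℤ):ℂ) = -3*(n:ℂ)-1 by push_cast; ring, ← hrd] at this
    have hi4 : ∫ t in (0:ℝ)..(2*π), Complex.exp (s*t) = 0 := by
      have := exp_int_int (-2*n) (by omega)
      rwa [show ((-2*n:ℤ):ℂ) = -2*(n:ℂ) by push_cast; ring, ← hsd] at this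
    have J : ∀ (e : ℂ), IntervalIntegrable (fun t : ℝ => Complex.exp (e*t)) MeasureTheory.volume 0 (2*π) :=
      fun e => Continuous.intervalIntegrable (by fun_prop) _ _
    rw [integral_add ((((((J p).const_mul _).add ((J q).const_mul _)).add ((J r).const_mul _)).add ((J s).const_mul _))) intervalIntegrable_const,
      integral_add (((((J p).const_mul _).add ((J q).const_mul _)).add ((J r).const_mul _))) ((J s).const_mul _),
      integral_add ((((J p).const_mul _).add ((J q).const_mul _))) ((J r).const_mul _),
      integral_add ((J p).const_mul _) ((J q).const_mul _),
      integral_const_mul, integral_const_mul, integral_const_mul, integral_const_mul,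
      hi1, hi2, hi3, hi4, integral_const]
    simp only [mul_zero, zero_add, add_zero, sub_zero, smul_eq_mul, Complex.real_smul]
    have hsq : (n:ℂ)^2 - 1 ≠ 0 := by
      have e : (n:ℂ)^2 - 1 = ((n:ℂ)-1) * (-(-(n:ℂ)-1)) := by ring
      rw [e]
      exact mul_ne_zero hc1 (neg_ne_zero.mpr hc2)
    rw [hc, hd, hpd, hqd]
    field_simp
    push_cast
    linear_combination ((-(2*(π:ℂ))*B^2*(n:ℂ)*2 + (2*(π:ℂ))*B^2*(n:ℂ)^3*2 - A*B*(n:ℂ)*π*16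
      + A*B*(n:ℂ)^3*π*16 + A^2*(n:ℂ)^2*π*4 - A^2*π*4 + B^2*(n:ℂ)*π*4 - B^2*(n:ℂ)^3*π*4)
      + (A*B*(n:ℂ)*π*4 - A*B*(n:ℂ)^3*π*4 - A^2*(n:ℂ)^2*π*16 + A^2*π*16) * I
      + (-A*B*(n:ℂ)*π*16 + A*B*(n:ℂ)^3*π*16) * (I^2 - 1)
      + 16*π*A*B*(n:ℂ)*(1-(n:ℂ)^2)*I^2 + 16*π*A^2*((n:ℂ)^2-1)*I) * Complex.I_sq
  refine ⟨key, ?_⟩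
  rw [key]
  have hsq : (n:ℂ)^2 - 1 ≠ 0 := by
    have e : (n:ℂ)^2 - 1 = ((n:ℂ)-1) * (-(-(n:ℂ)-1)) := by ring
    rw [e]
    exact mul_ne_zero hc1 (neg_ne_zero.mpr hc2)
  have h1 : I * (A:ℂ) + B ≠ 0 := by
    intro h
    rw [Complex.ext_iff] at h
    simp at h
    exact hAB (by simp [h.1, h.2])
  have h2 : (A:ℂ) - I * B * n ≠ 0 := by
    intro h
    rw [Complex.ext_iff] at h
    simp at h
    have hB : B = 0 := h.2.resolve_right hn0
    exact hAB (by simp [h.1, hB])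
  exact div_ne_zero (mul_ne_zero (mul_ne_zero h1 h2)
    (Complex.ofReal_ne_zero.mpr Real.pi_ne_zero)) hsq
end

section
/- Let ω₁, ω₂ ∈ ℝ with ω₁ ≠ ω₂. If ω₂ = 0 assume T > 0, and if ω₂ ≠ 0 assume T ≥ 2π/|ω₂|. Then there exists f ∈ L²([0,T], ℝ) such that ∫₀^T e^{-iω₂ t} f(t) dt = 0 and ∫₀^T ∫₀^{t₁} e^{-iω₁ t₁ - iω₂ t₂} f(t₁) f(t₂) dt₂ dt₁ ≠ 0. -/
open Complex Real intervalIntegral MeasureTheory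

noncomputable section
namespace Stmt8

def E (μ t : ℝ) : ℂ := Complex.exp (-I * μ * t)

def ind (l r t : ℝ) : ℝ := Set.indicator (Set.Ioc l r) (fun _ => (1:ℝ)) t

lemma E_mul_ind (μ l r : ℝ) :
    (fun t => E μ t * (ind l r t : ℂ)) = Set.indicator (Set.Ioc l r) (E μ) := by
  funext t
  simp only [ind, Set.indicator]
  split_ifs <;> simp

lemma continuous_E (μ : ℝ) : Continuous (E μ) := by
  unfold E; fun_prop

lemma intervalIntegrable_E_ind (μ l r a b : ℝ) :
    IntervalIntegrable (fun t => E μ t * (ind l r t : ℂ)) volume a b := by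
  rw [E_mul_ind]
  rw [intervalIntegrable_iff, MeasureTheory.IntegrableOn,
    MeasureTheory.integrable_indicator_iff measurableSet_Ioc]
  exact ((continuous_E μ).integrableOn_Ioc).mono_measure Measure.restrict_le_self

lemma integral_E_ind_full {μ l r x : ℝ} (hl : 0 ≤ l) (hr : l ≤ r) (hx : r ≤ x) :
    (∫ t in (0:ℝ)..x, E μ t * (ind l r t : ℂ)) = ∫ t in l..r, E μ t := by
  rw [E_mul_ind]
  rw [intervalIntegral.integral_of_le (le_trans hl (le_trans hr hx)),
    intervalIntegral.integral_of_le hr]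
  rw [MeasureTheory.integral_indicator measurableSet_Ioc]
  rw [Measure.restrict_restrict measurableSet_Ioc]
  congr 1
  rw [Set.inter_eq_left.2]
  exact Set.Ioc_subset_Ioc hl hx

lemma integral_E_ind_none {μ l r x : ℝ} (h0 : 0 ≤ x) (hx : x ≤ l) :
    (∫ t in (0:ℝ)..x, E μ t * (ind l r t : ℂ)) = 0 := by
  rw [E_mul_ind]
  rw [intervalIntegral.integral_of_le h0]
  rw [MeasureTheory.integral_indicator measurableSet_Ioc]
  rw [Measure.restrict_restrict measurableSet_Ioc]
  rw [show Set.Ioc l r ∩ Set.Ioc 0 x = ∅ by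
    ext t; simp only [Set.mem_inter_iff, Set.mem_Ioc, Set.mem_empty_iff_false, iff_false]
    rintro ⟨⟨h1,_⟩,⟨_,h4⟩⟩; linarith]
  simp

lemma integral_E_shift (μ l δ : ℝ) :
    (∫ t in l..(l+δ), E μ t) = E μ l * ∫ t in (0:ℝ)..δ, E μ t := by
  rw [show (∫ t in l..(l+δ), E μ t) = ∫ t in (0:ℝ)..δ, E μ (t + l) by
    rw [intervalIntegral.integral_comp_add_right (fun t => E μ t) l, zero_add, add_comm δ l]]
  rw [← intervalIntegral.integral_const_mul]
  congr 1; funext t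
  simp only [E]
  rw [← Complex.exp_add]
  congr 1
  push_cast
  ring

lemma sigma_ne_zero {μ δ : ℝ} (hδ : 0 < δ) (hb : |μ| * δ < π / 2) :
    (∫ t in (0:ℝ)..δ, E μ t) ≠ 0 := by
  have hre : (∫ t in (0:ℝ)..δ, E μ t).re = ∫ t in (0:ℝ)..δ, Real.cos (μ * t) := by
    rw [intervalIntegral.integral_of_le hδ.le, intervalIntegral.integral_of_le hδ.le]
    have hint : Integrable (E μ) (volume.restrict (Set.Ioc 0 δ)) :=
      (continuous_E μ).integrableOn_Ioc
    have h2 := _root_.integral_re (μ := volume.restrict (Set.Ioc 0 δ)) hint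
    rw [← RCLike.re_eq_complex_re, ← h2]
    congr 1; funext t
    rw [RCLike.re_eq_complex_re]
    have : E μ t = Complex.exp ((-(μ*t) : ℝ) * I) := by
      unfold E; congr 1; push_cast; ring
    rw [this, Complex.exp_ofReal_mul_I_re, Real.cos_neg]
  have hpos : 0 < (∫ t in (0:ℝ)..δ, E μ t).re := by
    rw [hre]
    apply intervalIntegral.intervalIntegral_pos_of_pos_on
    · exact (Real.continuous_cos.comp (continuous_const.mul continuous_id)).intervalIntegrable _ _
    · intro t ht
      apply Real.cos_pos_of_mem_Ioo
      have h1 : |μ| * t ≤ |μ| * δ := mul_le_mul_of_nonneg_left ht.2.le (abs_nonneg μ)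
      have h2 : μ * t ≤ |μ| * t := mul_le_mul_of_nonneg_right (le_abs_self μ) ht.1.le
      have h3 : -(|μ| * t) ≤ μ * t := by nlinarith [neg_abs_le μ, ht.1.le]
      constructor
      · linarith
      · linarith
    · exact hδ
  intro h
  rw [h] at hpos
  simp at hpos

def st (l₁ l₂ l₃ l₄ δ a b c d : ℝ) (t : ℝ) : ℝ :=
  a * ind l₁ (l₁+δ) t + b * ind l₂ (l₂+δ) t + c * ind l₃ (l₃+δ) t + d * ind l₄ (l₄+δ) t

def Fb (ω₂ l δ : ℝ) (x : ℝ) : ℂ := ∫ t in (0:ℝ)..x, E ω₂ t * (ind l (l+δ) t : ℂ)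

def Dg (ω₁ ω₂ l δ T : ℝ) : ℂ :=
  ∫ t in (0:ℝ)..T, E ω₁ t * (ind l (l+δ) t : ℂ) * Fb ω₂ l δ t

lemma memℒp_st (l₁ l₂ l₃ l₄ δ a b c d T : ℝ) :
    MemLp (st l₁ l₂ l₃ l₄ δ a b c d) 2 (volume.restrict (Set.Icc 0 T)) := by
  have h : ∀ l r : ℝ, MemLp (fun t => ind l r t) 2 (volume.restrict (Set.Icc 0 T)) := by
    intro l r
    exact memLp_indicator_const 2 measurableSet_Ioc (1:ℝ)
      (Or.inr (((Measure.restrict_apply_le _ _).trans_lt measure_Ioc_lt_top).ne))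
  exact ((((h _ _).const_mul a).add ((h _ _).const_mul b)).add
    ((h _ _).const_mul c)).add ((h _ _).const_mul d)

lemma continuous_Fb (ω₂ l δ : ℝ) : Continuous (Fb ω₂ l δ) :=
  intervalIntegral.continuous_primitive (fun a b => intervalIntegrable_E_ind ω₂ l (l+δ) a b) 0

lemma integral4 {T : ℝ} {f1 f2 f3 f4 : ℝ → ℂ}
    (h1 : IntervalIntegrable f1 volume 0 T) (h2 : IntervalIntegrable f2 volume 0 T)
    (h3 : IntervalIntegrable f3 volume 0 T) (h4 : IntervalIntegrable f4 volume 0 T)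
    (a b c d : ℂ) :
    (∫ t in (0:ℝ)..T, (a * f1 t + b * f2 t + c * f3 t + d * f4 t)) =
      a * (∫ t in (0:ℝ)..T, f1 t) + b * (∫ t in (0:ℝ)..T, f2 t)
      + c * (∫ t in (0:ℝ)..T, f3 t) + d * (∫ t in (0:ℝ)..T, f4 t) := by
  rw [intervalIntegral.integral_add (((h1.const_mul a).add (h2.const_mul b)).add
      (h3.const_mul c)) (h4.const_mul d),
    intervalIntegral.integral_add ((h1.const_mul a).add (h2.const_mul b)) (h3.const_mul c),
    intervalIntegral.integral_add (h1.const_mul a) (h2.const_mul b),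
    intervalIntegral.integral_const_mul, intervalIntegral.integral_const_mul,
    intervalIntegral.integral_const_mul, intervalIntegral.integral_const_mul]

lemma st_cast (l₁ l₂ l₃ l₄ δ a b c d : ℝ) (t : ℝ) :
    ((st l₁ l₂ l₃ l₄ δ a b c d t : ℝ) : ℂ) =
      (a:ℂ) * (ind l₁ (l₁+δ) t : ℂ) + (b:ℂ) * (ind l₂ (l₂+δ) t : ℂ)
      + (c:ℂ) * (ind l₃ (l₃+δ) t : ℂ) + (d:ℂ) * (ind l₄ (l₄+δ) t : ℂ) := by
  simp [st]

lemma intervalIntegrable_E_st (μ l₁ l₂ l₃ l₄ δ a b c d x y : ℝ) :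
    IntervalIntegrable (fun t => E μ t * (st l₁ l₂ l₃ l₄ δ a b c d t : ℂ)) volume x y := by
  have : (fun t => E μ t * (st l₁ l₂ l₃ l₄ δ a b c d t : ℂ)) =
      fun t => (a:ℂ) * (E μ t * (ind l₁ (l₁+δ) t : ℂ)) + (b:ℂ) * (E μ t * (ind l₂ (l₂+δ) t : ℂ))
      + (c:ℂ) * (E μ t * (ind l₃ (l₃+δ) t : ℂ)) + (d:ℂ) * (E μ t * (ind l₄ (l₄+δ) t : ℂ)) := by
    funext t; rw [st_cast]; ring
  rw [this]
  exact ((((intervalIntegrable_E_ind μ _ _ x y).const_mul _).add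
    ((intervalIntegrable_E_ind μ _ _ x y).const_mul _)).add
    ((intervalIntegrable_E_ind μ _ _ x y).const_mul _)).add
    ((intervalIntegrable_E_ind μ _ _ x y).const_mul _)

lemma L_st {ω₂ l₁ l₂ l₃ l₄ δ T : ℝ} (a b c d : ℝ)
    (h0 : 0 ≤ l₁) (hδ : 0 ≤ δ) (h12 : l₁ + δ ≤ l₂) (h23 : l₂ + δ ≤ l₃)
    (h34 : l₃ + δ ≤ l₄) (h4T : l₄ + δ ≤ T) :
    (∫ t in (0:ℝ)..T, E ω₂ t * (st l₁ l₂ l₃ l₄ δ a b c d t : ℂ)) =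
      (∫ t in (0:ℝ)..δ, E ω₂ t) *
        ((a:ℂ) * E ω₂ l₁ + (b:ℂ) * E ω₂ l₂ + (c:ℂ) * E ω₂ l₃ + (d:ℂ) * E ω₂ l₄) := by
  have h1 : 0 ≤ l₂ := by linarith
  have h2 : 0 ≤ l₃ := by linarith
  have h3 : 0 ≤ l₄ := by linarith
  have key : (fun t => E ω₂ t * (st l₁ l₂ l₃ l₄ δ a b c d t : ℂ)) =
      fun t => (a:ℂ) * (E ω₂ t * (ind l₁ (l₁+δ) t : ℂ)) + (b:ℂ) * (E ω₂ t * (ind l₂ (l₂+δ) t : ℂ))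
      + (c:ℂ) * (E ω₂ t * (ind l₃ (l₃+δ) t : ℂ)) + (d:ℂ) * (E ω₂ t * (ind l₄ (l₄+δ) t : ℂ)) := by
    funext t; rw [st_cast]; ring
  rw [key, integral4 (intervalIntegrable_E_ind _ _ _ _ _) (intervalIntegrable_E_ind _ _ _ _ _)
    (intervalIntegrable_E_ind _ _ _ _ _) (intervalIntegrable_E_ind _ _ _ _ _)]
  rw [integral_E_ind_full h0 (by linarith) (by linarith),
      integral_E_ind_full h1 (by linarith) (by linarith),
      integral_E_ind_full h2 (by linarith) (by linarith),
      integral_E_ind_full h3 (by linarith) (by linarith),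
      integral_E_shift, integral_E_shift, integral_E_shift, integral_E_shift]
  ring

lemma intervalIntegrable_E_ind_Fb (ω₁ ω₂ li lj δ T : ℝ) :
    IntervalIntegrable (fun t => E ω₁ t * (ind li (li+δ) t : ℂ) * Fb ω₂ lj δ t) volume 0 T :=
  (intervalIntegrable_E_ind ω₁ li (li+δ) 0 T).mul_continuousOn
    (continuous_Fb ω₂ lj δ).continuousOn

lemma ind_eq_zero {l r t : ℝ} (h : t ∉ Set.Ioc l r) : ind l r t = 0 :=
  Set.indicator_of_notMem h _

lemma T_lt {ω₁ ω₂ li lj δ T : ℝ} (h0 : 0 ≤ li) (h : li + δ ≤ lj) :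
    (∫ t in (0:ℝ)..T, E ω₁ t * (ind li (li+δ) t : ℂ) * Fb ω₂ lj δ t) = 0 := by
  have key : ∀ t : ℝ, E ω₁ t * (ind li (li+δ) t : ℂ) * Fb ω₂ lj δ t = 0 := by
    intro t
    by_cases ht : t ∈ Set.Ioc li (li+δ)
    · have : Fb ω₂ lj δ t = 0 :=
        integral_E_ind_none (by linarith [ht.1]) (by linarith [ht.2])
      rw [this, mul_zero]
    · rw [ind_eq_zero ht]; simp
  simp only [key, intervalIntegral.integral_zero]

lemma T_gt {ω₁ ω₂ li lj δ T : ℝ} (h0 : 0 ≤ lj) (hδ : 0 ≤ δ)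
    (h : lj + δ ≤ li) (hT : li + δ ≤ T) :
    (∫ t in (0:ℝ)..T, E ω₁ t * (ind li (li+δ) t : ℂ) * Fb ω₂ lj δ t) =
      (E ω₁ li * ∫ t in (0:ℝ)..δ, E ω₁ t) * (E ω₂ lj * ∫ t in (0:ℝ)..δ, E ω₂ t) := by
  have key : ∀ t : ℝ, E ω₁ t * (ind li (li+δ) t : ℂ) * Fb ω₂ lj δ t =
      (E ω₂ lj * ∫ s in (0:ℝ)..δ, E ω₂ s) * (E ω₁ t * (ind li (li+δ) t : ℂ)) := by
    intro t
    by_cases ht : t ∈ Set.Ioc li (li+δ)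
    · have : Fb ω₂ lj δ t = E ω₂ lj * ∫ s in (0:ℝ)..δ, E ω₂ s := by
        rw [Fb, integral_E_ind_full h0 (by linarith) (by linarith [ht.1]), integral_E_shift]
      rw [this]; ring
    · rw [ind_eq_zero ht]; simp
  calc (∫ t in (0:ℝ)..T, E ω₁ t * (ind li (li+δ) t : ℂ) * Fb ω₂ lj δ t)
      = ∫ t in (0:ℝ)..T, (E ω₂ lj * ∫ s in (0:ℝ)..δ, E ω₂ s) * (E ω₁ t * (ind li (li+δ) t : ℂ)) := by
        simp only [key]
    _ = (E ω₂ lj * ∫ s in (0:ℝ)..δ, E ω₂ s) * ∫ t in (0:ℝ)..T, E ω₁ t * (ind li (li+δ) t : ℂ) :=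
        intervalIntegral.integral_const_mul _ _
    _ = _ := by
        rw [integral_E_ind_full (by linarith) (by linarith) hT, integral_E_shift]; ring

lemma Q_st {ω₁ ω₂ l₁ l₂ l₃ l₄ δ T : ℝ} (a b c d : ℝ)
    (h0 : 0 ≤ l₁) (hδ : 0 ≤ δ) (h12 : l₁ + δ ≤ l₂) (h23 : l₂ + δ ≤ l₃)
    (h34 : l₃ + δ ≤ l₄) (h4T : l₄ + δ ≤ T) :
    (∫ t₁ in (0:ℝ)..T, ∫ t₂ in (0:ℝ)..t₁,
        Complex.exp (-I * ω₁ * t₁ - I * ω₂ * t₂) * (st l₁ l₂ l₃ l₄ δ a b c d t₁ : ℂ)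
          * (st l₁ l₂ l₃ l₄ δ a b c d t₂ : ℂ)) =
      (a:ℂ)^2 * Dg ω₁ ω₂ l₁ δ T + (b:ℂ)^2 * Dg ω₁ ω₂ l₂ δ T + (c:ℂ)^2 * Dg ω₁ ω₂ l₃ δ T
      + (d:ℂ)^2 * Dg ω₁ ω₂ l₄ δ T
      + (∫ t in (0:ℝ)..δ, E ω₁ t) * (∫ t in (0:ℝ)..δ, E ω₂ t) *
        ((b:ℂ)*a*(E ω₁ l₂ * E ω₂ l₁) + (c:ℂ)*a*(E ω₁ l₃ * E ω₂ l₁) + (c:ℂ)*b*(E ω₁ l₃ * E ω₂ l₂)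
        + (d:ℂ)*a*(E ω₁ l₄ * E ω₂ l₁) + (d:ℂ)*b*(E ω₁ l₄ * E ω₂ l₂)
        + (d:ℂ)*c*(E ω₁ l₄ * E ω₂ l₃)) := by
  set S := st l₁ l₂ l₃ l₄ δ a b c d with hSdef
  have hexp : ∀ t₁ t₂ : ℝ, Complex.exp (-I * ω₁ * t₁ - I * ω₂ * t₂) = E ω₁ t₁ * E ω₂ t₂ := by
    intro t₁ t₂; rw [E, E, ← Complex.exp_add]; congr 1; ring
  have step1 : (∫ t₁ in (0:ℝ)..T, ∫ t₂ in (0:ℝ)..t₁,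
        Complex.exp (-I * ω₁ * t₁ - I * ω₂ * t₂) * (S t₁ : ℂ) * (S t₂ : ℂ)) =
      ∫ t₁ in (0:ℝ)..T, E ω₁ t₁ * (S t₁ : ℂ) * ∫ t₂ in (0:ℝ)..t₁, E ω₂ t₂ * (S t₂ : ℂ) := by
    apply intervalIntegral.integral_congr
    intro t₁ _
    show (∫ t₂ in (0:ℝ)..t₁, Complex.exp (-I * ω₁ * t₁ - I * ω₂ * t₂) * (S t₁ : ℂ) * (S t₂ : ℂ))
      = E ω₁ t₁ * (S t₁ : ℂ) * ∫ t₂ in (0:ℝ)..t₁, E ω₂ t₂ * (S t₂ : ℂ)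
    rw [← intervalIntegral.integral_const_mul]
    apply intervalIntegral.integral_congr
    intro t₂ _
    show Complex.exp (-I * ω₁ * t₁ - I * ω₂ * t₂) * (S t₁ : ℂ) * (S t₂ : ℂ)
      = E ω₁ t₁ * (S t₁ : ℂ) * (E ω₂ t₂ * (S t₂ : ℂ))
    rw [hexp]; ring
  rw [step1]
  have hF : ∀ x : ℝ, (∫ t in (0:ℝ)..x, E ω₂ t * (S t : ℂ)) =
      (a:ℂ) * Fb ω₂ l₁ δ x + (b:ℂ) * Fb ω₂ l₂ δ x + (c:ℂ) * Fb ω₂ l₃ δ x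
      + (d:ℂ) * Fb ω₂ l₄ δ x := by
    intro x
    have key : (fun t => E ω₂ t * (S t : ℂ)) =
        fun t => (a:ℂ) * (E ω₂ t * (ind l₁ (l₁+δ) t : ℂ)) + (b:ℂ) * (E ω₂ t * (ind l₂ (l₂+δ) t : ℂ))
        + (c:ℂ) * (E ω₂ t * (ind l₃ (l₃+δ) t : ℂ)) + (d:ℂ) * (E ω₂ t * (ind l₄ (l₄+δ) t : ℂ)) := by
      funext t; rw [hSdef, st_cast]; ring
    rw [key, integral4 (intervalIntegrable_E_ind _ _ _ _ _) (intervalIntegrable_E_ind _ _ _ _ _)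
      (intervalIntegrable_E_ind _ _ _ _ _) (intervalIntegrable_E_ind _ _ _ _ _)]
    rfl
  have step2 : (fun t₁ => E ω₁ t₁ * (S t₁ : ℂ) * ∫ t₂ in (0:ℝ)..t₁, E ω₂ t₂ * (S t₂ : ℂ)) =
      fun t₁ => (a:ℂ) * (E ω₁ t₁ * (S t₁ : ℂ) * Fb ω₂ l₁ δ t₁)
        + (b:ℂ) * (E ω₁ t₁ * (S t₁ : ℂ) * Fb ω₂ l₂ δ t₁)
        + (c:ℂ) * (E ω₁ t₁ * (S t₁ : ℂ) * Fb ω₂ l₃ δ t₁)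
        + (d:ℂ) * (E ω₁ t₁ * (S t₁ : ℂ) * Fb ω₂ l₄ δ t₁) := by
    funext t₁; rw [hF t₁]; ring
  have hIS : ∀ lj : ℝ, IntervalIntegrable (fun t => E ω₁ t * (S t : ℂ) * Fb ω₂ lj δ t) volume 0 T :=
    fun lj => (intervalIntegrable_E_st ω₁ l₁ l₂ l₃ l₄ δ a b c d 0 T).mul_continuousOn
      (continuous_Fb ω₂ lj δ).continuousOn
  rw [step2, integral4 (hIS l₁) (hIS l₂) (hIS l₃) (hIS l₄)]
  have col : ∀ lj : ℝ, (∫ t in (0:ℝ)..T, E ω₁ t * (S t : ℂ) * Fb ω₂ lj δ t) =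
      (a:ℂ) * (∫ t in (0:ℝ)..T, E ω₁ t * (ind l₁ (l₁+δ) t : ℂ) * Fb ω₂ lj δ t)
      + (b:ℂ) * (∫ t in (0:ℝ)..T, E ω₁ t * (ind l₂ (l₂+δ) t : ℂ) * Fb ω₂ lj δ t)
      + (c:ℂ) * (∫ t in (0:ℝ)..T, E ω₁ t * (ind l₃ (l₃+δ) t : ℂ) * Fb ω₂ lj δ t)
      + (d:ℂ) * (∫ t in (0:ℝ)..T, E ω₁ t * (ind l₄ (l₄+δ) t : ℂ) * Fb ω₂ lj δ t) := by
    intro lj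
    have key : (fun t => E ω₁ t * (S t : ℂ) * Fb ω₂ lj δ t) =
        fun t => (a:ℂ) * (E ω₁ t * (ind l₁ (l₁+δ) t : ℂ) * Fb ω₂ lj δ t)
        + (b:ℂ) * (E ω₁ t * (ind l₂ (l₂+δ) t : ℂ) * Fb ω₂ lj δ t)
        + (c:ℂ) * (E ω₁ t * (ind l₃ (l₃+δ) t : ℂ) * Fb ω₂ lj δ t)
        + (d:ℂ) * (E ω₁ t * (ind l₄ (l₄+δ) t : ℂ) * Fb ω₂ lj δ t) := by
      funext t; rw [hSdef, st_cast]; ring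
    rw [key, integral4 (intervalIntegrable_E_ind_Fb _ _ _ _ _ _) (intervalIntegrable_E_ind_Fb _ _ _ _ _ _)
      (intervalIntegrable_E_ind_Fb _ _ _ _ _ _) (intervalIntegrable_E_ind_Fb _ _ _ _ _ _)]
  rw [col l₁, col l₂, col l₃, col l₄]
  rw [T_lt (by linarith) h12, T_lt (by linarith) (by linarith : l₁ + δ ≤ l₃),
      T_lt (by linarith) (by linarith : l₁ + δ ≤ l₄),
      T_lt (by linarith) h23, T_lt (by linarith) (by linarith : l₂ + δ ≤ l₄),
      T_lt (by linarith) h34]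
  rw [T_gt (by linarith) hδ h12 (by linarith),
      T_gt (by linarith : (0:ℝ) ≤ l₁) hδ (by linarith : l₁ + δ ≤ l₃) (by linarith),
      T_gt (by linarith : (0:ℝ) ≤ l₂) hδ h23 (by linarith),
      T_gt (by linarith : (0:ℝ) ≤ l₁) hδ (by linarith : l₁ + δ ≤ l₄) h4T,
      T_gt (by linarith : (0:ℝ) ≤ l₂) hδ (by linarith : l₂ + δ ≤ l₄) h4T,
      T_gt (by linarith : (0:ℝ) ≤ l₃) hδ h34 h4T]
  rw [show (∫ t in (0:ℝ)..T, E ω₁ t * (ind l₁ (l₁+δ) t : ℂ) * Fb ω₂ l₁ δ t) = Dg ω₁ ω₂ l₁ δ T from rfl,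
      show (∫ t in (0:ℝ)..T, E ω₁ t * (ind l₂ (l₂+δ) t : ℂ) * Fb ω₂ l₂ δ t) = Dg ω₁ ω₂ l₂ δ T from rfl,
      show (∫ t in (0:ℝ)..T, E ω₁ t * (ind l₃ (l₃+δ) t : ℂ) * Fb ω₂ l₃ δ t) = Dg ω₁ ω₂ l₃ δ T from rfl,
      show (∫ t in (0:ℝ)..T, E ω₁ t * (ind l₄ (l₄+δ) t : ℂ) * Fb ω₂ l₄ δ t) = Dg ω₁ ω₂ l₄ δ T from rfl]
  ring

lemma key (ω₁ ω₂ T : ℝ) {l₁ l₂ l₃ l₄ δ : ℝ} (a b c d : ℝ)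
    (h0 : 0 ≤ l₁) (hδ : 0 < δ) (h12 : l₁ + δ ≤ l₂) (h23 : l₂ + δ ≤ l₃)
    (h34 : l₃ + δ ≤ l₄) (h4T : l₄ + δ ≤ T)
    (hb1 : |ω₁| * δ < π/2) (hb2 : |ω₂| * δ < π/2)
    (hLg : (a:ℂ) * E ω₂ l₁ + (c:ℂ) * E ω₂ l₃ = 0)
    (hLf : (b:ℂ) * E ω₂ l₂ + (d:ℂ) * E ω₂ l₄ = 0)
    (hN : (b:ℂ) * ((a:ℂ) * (E ω₁ l₂ * E ω₂ l₁) + (c:ℂ) * (E ω₁ l₃ * E ω₂ l₂)) ≠ 0) :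
    ∃ f : ℝ → ℝ, MemLp f 2 (volume.restrict (Set.Icc 0 T)) ∧
      (∫ t in (0:ℝ)..T, Complex.exp (-I * ω₂ * t) * (f t)) = 0 ∧
      (∫ t₁ in (0:ℝ)..T, ∫ t₂ in (0:ℝ)..t₁,
          Complex.exp (-I * ω₁ * t₁ - I * ω₂ * t₂) * (f t₁) * (f t₂)) ≠ 0 := by
  have hσ1 : (∫ t in (0:ℝ)..δ, E ω₁ t) ≠ 0 := sigma_ne_zero hδ hb1
  have hσ2 : (∫ t in (0:ℝ)..δ, E ω₂ t) ≠ 0 := sigma_ne_zero hδ hb2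
  have hLgen : ∀ p q r s : ℝ, (p:ℂ) * E ω₂ l₁ + (q:ℂ) * E ω₂ l₂ + (r:ℂ) * E ω₂ l₃ + (s:ℂ) * E ω₂ l₄ = 0 →
      (∫ t in (0:ℝ)..T, Complex.exp (-I * ω₂ * t) * (st l₁ l₂ l₃ l₄ δ p q r s t : ℂ)) = 0 := by
    intro p q r s hpq
    have : (∫ t in (0:ℝ)..T, Complex.exp (-I * ω₂ * t) * (st l₁ l₂ l₃ l₄ δ p q r s t : ℂ))
        = ∫ t in (0:ℝ)..T, E ω₂ t * (st l₁ l₂ l₃ l₄ δ p q r s t : ℂ) := rfl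
    rw [this, L_st p q r s h0 hδ.le h12 h23 h34 h4T, hpq, mul_zero]
  have hQ : ∀ p q r s : ℝ, (∫ t₁ in (0:ℝ)..T, ∫ t₂ in (0:ℝ)..t₁,
        Complex.exp (-I * ω₁ * t₁ - I * ω₂ * t₂) * (st l₁ l₂ l₃ l₄ δ p q r s t₁ : ℂ)
        * (st l₁ l₂ l₃ l₄ δ p q r s t₂ : ℂ)) =
      (p:ℂ)^2 * Dg ω₁ ω₂ l₁ δ T + (q:ℂ)^2 * Dg ω₁ ω₂ l₂ δ T + (r:ℂ)^2 * Dg ω₁ ω₂ l₃ δ T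
      + (s:ℂ)^2 * Dg ω₁ ω₂ l₄ δ T
      + (∫ t in (0:ℝ)..δ, E ω₁ t) * (∫ t in (0:ℝ)..δ, E ω₂ t) *
        ((q:ℂ)*p*(E ω₁ l₂ * E ω₂ l₁) + (r:ℂ)*p*(E ω₁ l₃ * E ω₂ l₁) + (r:ℂ)*q*(E ω₁ l₃ * E ω₂ l₂)
        + (s:ℂ)*p*(E ω₁ l₄ * E ω₂ l₁) + (s:ℂ)*q*(E ω₁ l₄ * E ω₂ l₂)
        + (s:ℂ)*r*(E ω₁ l₄ * E ω₂ l₃)) := fun p q r s =>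
    Q_st p q r s h0 hδ.le h12 h23 h34 h4T
  by_cases hg : (∫ t₁ in (0:ℝ)..T, ∫ t₂ in (0:ℝ)..t₁,
      Complex.exp (-I * ω₁ * t₁ - I * ω₂ * t₂) * (st l₁ l₂ l₃ l₄ δ a 0 c 0 t₁ : ℂ)
      * (st l₁ l₂ l₃ l₄ δ a 0 c 0 t₂ : ℂ)) = 0
  · by_cases hf : (∫ t₁ in (0:ℝ)..T, ∫ t₂ in (0:ℝ)..t₁,
        Complex.exp (-I * ω₁ * t₁ - I * ω₂ * t₂) * (st l₁ l₂ l₃ l₄ δ 0 b 0 d t₁ : ℂ)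
        * (st l₁ l₂ l₃ l₄ δ 0 b 0 d t₂ : ℂ)) = 0
    · refine ⟨st l₁ l₂ l₃ l₄ δ a b c d, memℒp_st _ _ _ _ _ _ _ _ _ _, hLgen a b c d (by
        linear_combination hLg + hLf), ?_⟩
      rw [hQ a b c d]
      rw [hQ a 0 c 0] at hg
      rw [hQ 0 b 0 d] at hf
      push_cast at hg hf ⊢
      have hdecomp : (a:ℂ)^2 * Dg ω₁ ω₂ l₁ δ T + (b:ℂ)^2 * Dg ω₁ ω₂ l₂ δ T
          + (c:ℂ)^2 * Dg ω₁ ω₂ l₃ δ T + (d:ℂ)^2 * Dg ω₁ ω₂ l₄ δ T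
          + (∫ t in (0:ℝ)..δ, E ω₁ t) * (∫ t in (0:ℝ)..δ, E ω₂ t) *
          ((b:ℂ)*a*(E ω₁ l₂ * E ω₂ l₁) + (c:ℂ)*a*(E ω₁ l₃ * E ω₂ l₁) + (c:ℂ)*b*(E ω₁ l₃ * E ω₂ l₂)
          + (d:ℂ)*a*(E ω₁ l₄ * E ω₂ l₁) + (d:ℂ)*b*(E ω₁ l₄ * E ω₂ l₂)
          + (d:ℂ)*c*(E ω₁ l₄ * E ω₂ l₃)) =
          (∫ t in (0:ℝ)..δ, E ω₁ t) * (∫ t in (0:ℝ)..δ, E ω₂ t) *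
            ((b:ℂ) * ((a:ℂ) * (E ω₁ l₂ * E ω₂ l₁) + (c:ℂ) * (E ω₁ l₃ * E ω₂ l₂))
             + (d:ℂ) * E ω₁ l₄ * ((a:ℂ) * E ω₂ l₁ + (c:ℂ) * E ω₂ l₃)) := by
        linear_combination hg + hf
      rw [hdecomp, hLg, mul_zero, add_zero]
      exact mul_ne_zero (mul_ne_zero hσ1 hσ2) hN
    · exact ⟨st l₁ l₂ l₃ l₄ δ 0 b 0 d, memℒp_st _ _ _ _ _ _ _ _ _ _,
        hLgen 0 b 0 d (by push_cast; linear_combination hLf), hf⟩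
  · exact ⟨st l₁ l₂ l₃ l₄ δ a 0 c 0, memℒp_st _ _ _ _ _ _ _ _ _ _,
      hLgen a 0 c 0 (by push_cast; linear_combination hLg), hg⟩

lemma E_zero_right (μ : ℝ) : E μ 0 = 1 := by simp [E]

lemma E_zero_left (x : ℝ) : E 0 x = 1 := by simp [E]

lemma E_ne_zero (μ x : ℝ) : E μ x ≠ 0 := Complex.exp_ne_zero _

lemma exp_I_real_eq_one {x : ℝ} (h : Complex.exp (I * x) = 1) (hx : |x| < 2 * π) : x = 0 := by
  rw [Complex.exp_eq_one_iff] at h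
  obtain ⟨n, hn⟩ := h
  have h2 : ((x : ℂ)) * I = ((2 * π * (n:ℝ) : ℝ) : ℂ) * I := by push_cast; linear_combination hn
  have h3 : x = 2 * π * (n:ℝ) := by exact_mod_cast mul_right_cancel₀ Complex.I_ne_zero h2
  have hπ := Real.pi_pos
  have hn0 : n = 0 := by
    by_contra hne
    have h4 : (1:ℝ) ≤ |(n:ℝ)| := by exact_mod_cast Int.one_le_abs hne
    rw [h3, abs_mul, abs_mul] at hx
    have : |(2:ℝ)| = 2 := by norm_num
    rw [this, abs_of_pos hπ] at hx
    nlinarith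
  rw [hn0] at h3; simpa using h3

lemma Nv_exp {ω₁ ω₂ P v : ℝ} (h : E ω₁ v + E ω₁ P * E ω₂ v = 0) :
    Complex.exp (I * ((ω₂ - ω₁) : ℝ) * v) = -E ω₁ P := by
  have hX : E ω₂ v * Complex.exp (I * ω₂ * v) = 1 := by
    rw [E, ← Complex.exp_add, show -I * (ω₂:ℂ) * v + I * ω₂ * v = 0 by ring, Complex.exp_zero]
  have h1 : Complex.exp (I * ((ω₂ - ω₁) : ℝ) * v) = E ω₁ v * Complex.exp (I * ω₂ * v) := by
    rw [E, ← Complex.exp_add]; congr 1; push_cast; ring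
  rw [h1]
  linear_combination Complex.exp (I * (ω₂:ℂ) * v) * h - E ω₁ P * hX

lemma E_P_eq_neg_one {ω₂ : ℝ} (hw2 : ω₂ ≠ 0) : E ω₂ (π / |ω₂|) = -1 := by
  rcases lt_or_gt_of_ne hw2 with hneg | hpos
  · have habs : ω₂ * (π / |ω₂|) = -π := by
      rw [abs_of_neg hneg, div_neg, mul_neg, mul_div_cancel₀ _ hw2]
    rw [E, show -I * (ω₂:ℂ) * ((π / |ω₂|:ℝ):ℂ) = ((ω₂ * (π / |ω₂|) : ℝ):ℂ) * (-I) by push_cast; ring,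
      habs]
    push_cast
    rw [show -(π:ℂ) * -I = π * I by ring, Complex.exp_pi_mul_I]
  · have habs : ω₂ * (π / |ω₂|) = π := by
      rw [abs_of_pos hpos]; field_simp
    rw [E, show -I * (ω₂:ℂ) * ((π / |ω₂|:ℝ):ℂ) = -(((ω₂ * (π / |ω₂|) : ℝ):ℂ) * I) by push_cast; ring,
      habs, Complex.exp_neg]
    rw [Complex.exp_pi_mul_I]
    norm_num

end Stmt8

open Stmt8

theorem stmt_8 (ω₁ ω₂ T : ℝ) (hω : ω₁ ≠ ω₂)
    (hT0 : ω₂ = 0 → 0 < T) (hT1 : ω₂ ≠ 0 → 2 * π / |ω₂| ≤ T) :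
    ∃ f : ℝ → ℝ, MemLp f 2 (volume.restrict (Set.Icc 0 T)) ∧
      (∫ t in (0:ℝ)..T, Complex.exp (-I * ω₂ * t) * (f t)) = 0 ∧
      (∫ t₁ in (0:ℝ)..T, ∫ t₂ in (0:ℝ)..t₁,
          Complex.exp (-I * ω₁ * t₁ - I * ω₂ * t₂) * (f t₁) * (f t₂)) ≠ 0 := by
  have hπ := Real.pi_pos
  by_cases hw2 : ω₂ = 0
  · subst hw2
    have hω₁ : ω₁ ≠ 0 := hω
    have hT : 0 < T := hT0 rfl
    have hA0 : (0:ℝ) < |ω₁| + 1 := by positivity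
    set h : ℝ := min T (π / (|ω₁| + 1)) / 8 with hh
    have hh0 : 0 < h := div_pos (lt_min hT (div_pos hπ hA0)) (by norm_num)
    have hhT : 8 * h ≤ T := by
      have := min_le_left T (π / (|ω₁| + 1)); rw [hh]; linarith
    have hhA : 8 * h ≤ π / (|ω₁| + 1) := by
      have := min_le_right T (π / (|ω₁| + 1)); rw [hh]; linarith
    have hb1 : |ω₁| * h < π / 2 := by
      have h1 : (|ω₁| + 1) * (8 * h) ≤ (|ω₁| + 1) * (π / (|ω₁| + 1)) :=
        mul_le_mul_of_nonneg_left hhA hA0.le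
      rw [mul_div_cancel₀ _ hA0.ne'] at h1
      nlinarith [abs_nonneg ω₁, hh0]
    have hb2 : |(0:ℝ)| * h < π / 2 := by
      simp only [abs_zero, zero_mul]; positivity
    have hN : ((1:ℝ):ℂ) * (((1:ℝ):ℂ) * (E ω₁ h * E 0 0)
        + ((-1:ℝ):ℂ) * (E ω₁ (2*h) * E 0 h)) ≠ 0 := by
      rw [E_zero_left, E_zero_left]
      push_cast
      intro hcon
      have heq : E ω₁ h = E ω₁ (2*h) := by linear_combination hcon
      have hsq : E ω₁ (2*h) = E ω₁ h * E ω₁ h := by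
        rw [E, E, ← Complex.exp_add]; congr 1; push_cast; ring
      have h1 : E ω₁ h = 1 := by
        have h0 := heq.trans hsq
        have h2 : E ω₁ h * 1 = E ω₁ h * E ω₁ h := by linear_combination h0
        exact (mul_left_cancel₀ (E_ne_zero ω₁ h) h2).symm
      have h2 : Complex.exp (I * ((-(ω₁ * h) : ℝ) : ℂ)) = 1 := by
        rw [← h1, E]; congr 1; push_cast; ring
      have h3 : -(ω₁ * h) = 0 := by
        apply exp_I_real_eq_one h2
        rw [abs_neg, abs_mul, abs_of_pos hh0]
        nlinarith
      have h4 : ω₁ * h = 0 := by linarith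
      rcases mul_eq_zero.1 h4 with h5 | h5
      · exact hω₁ h5
      · exact hh0.ne' h5
    exact key ω₁ 0 T (l₁ := 0) (l₂ := h) (l₃ := 2*h) (l₄ := 3*h) (δ := h)
      1 1 (-1) (-1)
      le_rfl hh0 (by linarith) (by linarith) (by linarith) (by linarith)
      hb1 hb2
      (by rw [E_zero_left, E_zero_left]; push_cast; ring)
      (by rw [E_zero_left, E_zero_left]; push_cast; ring)
      hN
  · have habsω₂ : 0 < |ω₂| := abs_pos.2 hw2
    set P : ℝ := π / |ω₂| with hP
    have hP0 : 0 < P := div_pos hπ habsω₂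
    have hPabs : |ω₂| * P = π := by rw [hP, mul_div_cancel₀ _ habsω₂.ne']
    have hT : 2 * P ≤ T := by
      have h1 := hT1 hw2
      have h2 : 2 * π / |ω₂| = 2 * P := by rw [hP]; ring
      linarith [h2 ▸ h1]
    have hθ : ω₂ - ω₁ ≠ 0 := sub_ne_zero.2 (Ne.symm hω)
    have hθabs : 0 < |ω₂ - ω₁| := abs_pos.2 hθ
    set u : ℝ := min P (π / |ω₂ - ω₁|) / 2 with hu
    have hu0 : 0 < u := div_pos (lt_min hP0 (div_pos hπ hθabs)) (by norm_num)
    have huP : u ≤ P / 2 := by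
      have := min_le_left P (π / |ω₂ - ω₁|); rw [hu]; linarith
    have huθ : |ω₂ - ω₁| * u ≤ π / 2 := by
      have h1 : 2 * u ≤ π / |ω₂ - ω₁| := by
        have := min_le_right P (π / |ω₂ - ω₁|); rw [hu]; linarith
      have h2 : |ω₂ - ω₁| * (2 * u) ≤ |ω₂ - ω₁| * (π / |ω₂ - ω₁|) :=
        mul_le_mul_of_nonneg_left h1 hθabs.le
      rw [mul_div_cancel₀ _ hθabs.ne'] at h2
      linarith
    have hEP : E ω₂ P = -1 := E_P_eq_neg_one hw2
    have hdisj : E ω₁ u + E ω₁ P * E ω₂ u ≠ 0 ∨ E ω₁ (u/2) + E ω₁ P * E ω₂ (u/2) ≠ 0 := by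
      by_contra hcon
      push_neg at hcon
      obtain ⟨h1, h2⟩ := hcon
      have e1 : Complex.exp (I * ((ω₂ - ω₁ : ℝ) : ℂ) * (u : ℂ)) = -E ω₁ P := Nv_exp h1
      have e2 : Complex.exp (I * ((ω₂ - ω₁ : ℝ) : ℂ) * ((u/2 : ℝ) : ℂ)) = -E ω₁ P := Nv_exp h2
      have hsq : Complex.exp (I * ((ω₂ - ω₁ : ℝ) : ℂ) * (u : ℂ)) =
          Complex.exp (I * ((ω₂ - ω₁ : ℝ) : ℂ) * ((u/2 : ℝ) : ℂ))
          * Complex.exp (I * ((ω₂ - ω₁ : ℝ) : ℂ) * ((u/2 : ℝ) : ℂ)) := by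
        rw [← Complex.exp_add]; congr 1; push_cast; ring
      have hWW : -E ω₁ P = (-E ω₁ P) * (-E ω₁ P) := by
        conv_lhs => rw [← e1]
        rw [hsq, e2]
      have hWne : -E ω₁ P ≠ 0 := by rw [← e2]; exact Complex.exp_ne_zero _
      have hW1 : -E ω₁ P = 1 := by
        rcases mul_eq_zero.1 (show (-E ω₁ P) * (-E ω₁ P - 1) = 0 by linear_combination -hWW)
          with hz | hz
        · exact absurd hz hWne
        · linear_combination hz
      have h3 : Complex.exp (I * (((ω₂ - ω₁) * (u/2) : ℝ) : ℂ)) = 1 := by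
        rw [show (I * (((ω₂ - ω₁) * (u/2) : ℝ) : ℂ)) =
          I * ((ω₂ - ω₁ : ℝ) : ℂ) * ((u/2 : ℝ) : ℂ) by push_cast; ring, e2, hW1]
      have h4 : (ω₂ - ω₁) * (u/2) = 0 := by
        apply exp_I_real_eq_one h3
        rw [abs_mul, abs_of_pos (by linarith : (0:ℝ) < u/2)]
        nlinarith
      rcases mul_eq_zero.1 h4 with h5 | h5
      · exact hθ h5
      · linarith
    obtain ⟨v, hv0, hvP, hNv⟩ : ∃ v : ℝ, 0 < v ∧ v ≤ P / 2 ∧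
        E ω₁ v + E ω₁ P * E ω₂ v ≠ 0 := by
      rcases hdisj with hd | hd
      · exact ⟨u, hu0, huP, hd⟩
      · exact ⟨u/2, by linarith, by linarith, hd⟩
    set δ : ℝ := min (min v (P - v)) (π / (2 * (|ω₁| + 1))) / 2 with hδdef
    have hA0 : (0:ℝ) < |ω₁| + 1 := by positivity
    have hδ0 : 0 < δ := by
      apply div_pos _ (by norm_num)
      exact lt_min (lt_min hv0 (by linarith)) (div_pos hπ (by positivity))
    have hm1 : min (min v (P - v)) (π / (2 * (|ω₁| + 1))) ≤ v :=
      le_trans (min_le_left _ _) (min_le_left _ _)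
    have hm2 : min (min v (P - v)) (π / (2 * (|ω₁| + 1))) ≤ P - v :=
      le_trans (min_le_left _ _) (min_le_right _ _)
    have hm3 : min (min v (P - v)) (π / (2 * (|ω₁| + 1))) ≤ π / (2 * (|ω₁| + 1)) :=
      min_le_right _ _
    have hδv : 2 * δ ≤ v := by rw [hδdef]; linarith
    have hδPv : 2 * δ ≤ P - v := by rw [hδdef]; linarith
    have hδC : 2 * δ ≤ π / (2 * (|ω₁| + 1)) := by rw [hδdef]; linarith
    have hb1 : |ω₁| * δ < π / 2 := by
      have h1 : (2 * (|ω₁| + 1)) * (2 * δ) ≤ (2 * (|ω₁| + 1)) * (π / (2 * (|ω₁| + 1))) :=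
        mul_le_mul_of_nonneg_left hδC (by positivity)
      rw [mul_div_cancel₀ _ (by positivity : (0:ℝ) < 2 * (|ω₁| + 1)).ne'] at h1
      nlinarith [abs_nonneg ω₁, hδ0]
    have hb2 : |ω₂| * δ < π / 2 := by
      have h1 : |ω₂| * (2 * δ) ≤ |ω₂| * v := mul_le_mul_of_nonneg_left hδv (abs_nonneg ω₂)
      have h2 : |ω₂| * v ≤ |ω₂| * (P / 2) := mul_le_mul_of_nonneg_left hvP (abs_nonneg ω₂)
      nlinarith [hPabs, hδ0, habsω₂, hπ]
    have hEPv : E ω₂ (P + v) = E ω₂ P * E ω₂ v := by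
      rw [E, E, E, ← Complex.exp_add]; congr 1; push_cast; ring
    exact key ω₁ ω₂ T (l₁ := 0) (l₂ := v) (l₃ := P) (l₄ := P + v) (δ := δ)
      1 1 1 1
      le_rfl hδ0 (by linarith) (by linarith) (by linarith) (by linarith)
      hb1 hb2
      (by rw [E_zero_right, hEP]; push_cast; ring)
      (by rw [hEPv, hEP]; push_cast; ring)
      (by
        rw [E_zero_right]
        push_cast
        intro hc
        exact hNv (by linear_combination hc))
end
end

section
/- Let A, B, C ∈ ℝ and f(t) = A + B sin(2t) + C cos(3t) on [0,2π]. Then R₄⟨f⟩ = -K₄⟨f⟩, where K₄⟨f⟩ := ∫₀^{2π} ∫₀^{t₁} ∫₀^{t₂} ∫₀^{t₃} e^{i(-t₁ + t₂ - t₃ - t₄)} f(t₁) f(t₂) f(t₃) f(t₄) dt₄ dt₃ dt₂ dt₁ and R₄⟨f⟩ := ∫₀^{2π} ∫₀^{t₁} ∫₀^{t₂} ∫₀^{t₃} e^{i(-t₁ - t₂ + t₃ - t₄)} f(t₁) f(t₂) f(t₃) f(t₄) dt₄ dt₃ dt₂ dt₁. -/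
open Complex Real intervalIntegral

theorem stmt_15 (A B C : ℝ)
    (f : ℝ → ℂ) (hf : ∀ t, f t = A + B * Real.sin (2*t) + C * Real.cos (3*t)) :
    (∫ t₁ in (0:ℝ)..(2*π), ∫ t₂ in (0:ℝ)..t₁, ∫ t₃ in (0:ℝ)..t₂, ∫ t₄ in (0:ℝ)..t₃,
        Complex.exp (I * (-t₁ - t₂ + t₃ - t₄)) * f t₁ * f t₂ * f t₃ * f t₄)
      = -∫ t₁ in (0:ℝ)..(2*π), ∫ t₂ in (0:ℝ)..t₁, ∫ t₃ in (0:ℝ)..t₂, ∫ t₄ in (0:ℝ)..t₃,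
        Complex.exp (I * (-t₁ + t₂ - t₃ - t₄)) * f t₁ * f t₂ * f t₃ * f t₄ := by
  -- continuity of f
  have hfc : Continuous f := by
    have h : f = fun t : ℝ => (A : ℂ) + B * Real.sin (2*t) + C * Real.cos (3*t) := funext hf
    rw [h]; fun_prop
  -- derivative of a primitive of a continuous function
  have prim : ∀ g : ℝ → ℂ, Continuous g → ∀ t : ℝ,
      HasDerivAt (fun u => ∫ s in (0:ℝ)..u, g s) (g t) t := by
    intro g hg t
    exact intervalIntegral.integral_hasDerivAt_right (hg.intervalIntegrable _ _)
      (hg.stronglyMeasurableAtFilter _ _) hg.continuousAt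
  -- derivative of t ↦ exp (c t)
  have hexp : ∀ (c : ℂ) (t : ℝ),
      HasDerivAt (fun u : ℝ => Complex.exp (c * u)) (c * Complex.exp (c * t)) t := by
    intro c t
    have h : HasDerivAt (fun z : ℂ => Complex.exp (c * z)) (c * Complex.exp (c * (t:ℂ))) (t : ℂ) := by
      have h0 := ((hasDerivAt_id (t:ℂ)).const_mul c).cexp
      simpa [mul_comm] using h0
    exact h.comp_ofReal
  -- the primitive H of e^{-is} f
  set H : ℝ → ℂ := fun t : ℝ => ∫ s in (0:ℝ)..t, Complex.exp (-(I * s)) * f s with hH_def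
  have hc1 : Continuous fun s : ℝ => Complex.exp (-(I * s)) * f s := by fun_prop
  have hH : ∀ t : ℝ, HasDerivAt H (Complex.exp (-(I * t)) * f t) t := by
    intro t; rw [hH_def]; exact prim _ hc1 t
  have hHc : Continuous H := Differentiable.continuous fun t => (hH t).differentiableAt
  have hH0 : H 0 = 0 := by rw [hH_def]; exact intervalIntegral.integral_same
  -- the primitive Φ of e^{is} f H
  set Φ : ℝ → ℂ := fun t : ℝ => ∫ s in (0:ℝ)..t, Complex.exp (I * s) * f s * H s with hΦ_def
  have hc2 : Continuous fun s : ℝ => Complex.exp (I * s) * f s * H s := by fun_prop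
  have hΦ : ∀ t : ℝ, HasDerivAt Φ (Complex.exp (I * t) * f t * H t) t := by
    intro t; rw [hΦ_def]; exact prim _ hc2 t
  have hΦc : Continuous Φ := Differentiable.continuous fun t => (hΦ t).differentiableAt
  have hΦ0 : Φ 0 = 0 := by rw [hΦ_def]; exact intervalIntegral.integral_same
  -- the primitive Ψ of e^{is} f H²
  set Ψ : ℝ → ℂ := fun t : ℝ => ∫ s in (0:ℝ)..t, Complex.exp (I * s) * f s * H s * H s with hΨ_def
  have hc3 : Continuous fun s : ℝ => Complex.exp (I * s) * f s * H s * H s := by fun_prop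
  have hΨ : ∀ t : ℝ, HasDerivAt Ψ (Complex.exp (I * t) * f t * H t * H t) t := by
    intro t; rw [hΨ_def]; exact prim _ hc3 t
  have hΨc : Continuous Ψ := Differentiable.continuous fun t => (hΨ t).differentiableAt
  have hΨ0 : Ψ 0 = 0 := by rw [hΨ_def]; exact intervalIntegral.integral_same
  -- key integral identities
  have keyHH : ∀ x : ℝ, (∫ s in (0:ℝ)..x, Complex.exp (-(I * s)) * f s * H s)
      = H x * H x / 2 := by
    intro x
    have hD : ∀ u ∈ Set.uIcc (0:ℝ) x, HasDerivAt (fun y => H y * H y / 2)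
        (Complex.exp (-(I * u)) * f u * H u) u := by
      intro u _
      have h0 := ((hH u).mul (hH u)).div_const 2
      convert h0 using 1
      · rfl
      simp only [Pi.mul_apply]; ring
    rw [intervalIntegral.integral_eq_sub_of_hasDerivAt hD ((hc1.mul hHc).intervalIntegrable _ _)]
    simp [hH0]
  have keyHΦ : ∀ x : ℝ, (∫ s in (0:ℝ)..x, Complex.exp (-(I * s)) * f s * Φ s)
      = H x * Φ x - Ψ x := by
    intro x
    have hD : ∀ u ∈ Set.uIcc (0:ℝ) x, HasDerivAt (fun y => H y * Φ y - Ψ y)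
        (Complex.exp (-(I * u)) * f u * Φ u) u := by
      intro u _
      have h0 := ((hH u).mul (hΦ u)).sub (hΨ u)
      convert h0 using 1
      · rfl
      · rfl
      ring
    rw [intervalIntegral.integral_eq_sub_of_hasDerivAt hD ((hc1.mul hΦc).intervalIntegrable _ _)]
    simp [hH0, hΦ0, hΨ0]
  -- collapse the inner integrals of the left-hand side (the "R" form)
  have step1L : ∀ t₁ t₂ t₃ : ℝ,
      (∫ t₄ in (0:ℝ)..t₃, Complex.exp (I * (-t₁ - t₂ + t₃ - t₄)) * f t₁ * f t₂ * f t₃ * f t₄)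
        = Complex.exp (I * (-t₁ - t₂ + t₃)) * f t₁ * f t₂ * f t₃ * H t₃ := by
    intro t₁ t₂ t₃
    have h : ∀ t₄ : ℝ, Complex.exp (I * (-t₁ - t₂ + t₃ - t₄)) * f t₁ * f t₂ * f t₃ * f t₄
        = (Complex.exp (I * (-t₁ - t₂ + t₃)) * f t₁ * f t₂ * f t₃)
            * (Complex.exp (-(I * t₄)) * f t₄) := by
      intro t₄
      rw [show I * (-(t₁:ℂ) - t₂ + t₃ - t₄) = I * (-(t₁:ℂ) - t₂ + t₃) + -(I * t₄) from by ring,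
        Complex.exp_add]
      ring
    simp only [h]
    rw [intervalIntegral.integral_const_mul, hH_def]
  have step2L : ∀ t₁ t₂ : ℝ,
      (∫ t₃ in (0:ℝ)..t₂, Complex.exp (I * (-t₁ - t₂ + t₃)) * f t₁ * f t₂ * f t₃ * H t₃)
        = Complex.exp (I * (-t₁ - t₂)) * f t₁ * f t₂ * Φ t₂ := by
    intro t₁ t₂
    have h : ∀ t₃ : ℝ, Complex.exp (I * (-t₁ - t₂ + t₃)) * f t₁ * f t₂ * f t₃ * H t₃
        = (Complex.exp (I * (-t₁ - t₂)) * f t₁ * f t₂)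
            * (Complex.exp (I * t₃) * f t₃ * H t₃) := by
      intro t₃
      rw [show I * (-(t₁:ℂ) - t₂ + t₃) = I * (-(t₁:ℂ) - t₂) + I * t₃ from by ring,
        Complex.exp_add]
      ring
    simp only [h]
    rw [intervalIntegral.integral_const_mul, hΦ_def]
  have step3L : ∀ t₁ : ℝ,
      (∫ t₂ in (0:ℝ)..t₁, Complex.exp (I * (-t₁ - t₂)) * f t₁ * f t₂ * Φ t₂)
        = Complex.exp (-(I * t₁)) * f t₁ * (H t₁ * Φ t₁ - Ψ t₁) := by
    intro t₁
    have h : ∀ t₂ : ℝ, Complex.exp (I * (-t₁ - t₂)) * f t₁ * f t₂ * Φ t₂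
        = (Complex.exp (-(I * t₁)) * f t₁) * (Complex.exp (-(I * t₂)) * f t₂ * Φ t₂) := by
      intro t₂
      rw [show I * (-(t₁:ℂ) - t₂) = -(I * t₁) + -(I * t₂) from by ring, Complex.exp_add]
      ring
    simp only [h]
    rw [intervalIntegral.integral_const_mul, keyHΦ t₁]
  -- collapse the inner integrals of the right-hand side (the "K" form)
  have step1K : ∀ t₁ t₂ t₃ : ℝ,
      (∫ t₄ in (0:ℝ)..t₃, Complex.exp (I * (-t₁ + t₂ - t₃ - t₄)) * f t₁ * f t₂ * f t₃ * f t₄)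
        = Complex.exp (I * (-t₁ + t₂ - t₃)) * f t₁ * f t₂ * f t₃ * H t₃ := by
    intro t₁ t₂ t₃
    have h : ∀ t₄ : ℝ, Complex.exp (I * (-t₁ + t₂ - t₃ - t₄)) * f t₁ * f t₂ * f t₃ * f t₄
        = (Complex.exp (I * (-t₁ + t₂ - t₃)) * f t₁ * f t₂ * f t₃)
            * (Complex.exp (-(I * t₄)) * f t₄) := by
      intro t₄
      rw [show I * (-(t₁:ℂ) + t₂ - t₃ - t₄) = I * (-(t₁:ℂ) + t₂ - t₃) + -(I * t₄) from by ring,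
        Complex.exp_add]
      ring
    simp only [h]
    rw [intervalIntegral.integral_const_mul, hH_def]
  have step2K : ∀ t₁ t₂ : ℝ,
      (∫ t₃ in (0:ℝ)..t₂, Complex.exp (I * (-t₁ + t₂ - t₃)) * f t₁ * f t₂ * f t₃ * H t₃)
        = Complex.exp (I * (-t₁ + t₂)) * f t₁ * f t₂ * (H t₂ * H t₂ / 2) := by
    intro t₁ t₂
    have h : ∀ t₃ : ℝ, Complex.exp (I * (-t₁ + t₂ - t₃)) * f t₁ * f t₂ * f t₃ * H t₃
        = (Complex.exp (I * (-t₁ + t₂)) * f t₁ * f t₂)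
            * (Complex.exp (-(I * t₃)) * f t₃ * H t₃) := by
      intro t₃
      rw [show I * (-(t₁:ℂ) + t₂ - t₃) = I * (-(t₁:ℂ) + t₂) + -(I * t₃) from by ring,
        Complex.exp_add]
      ring
    simp only [h]
    rw [intervalIntegral.integral_const_mul, keyHH t₂]
  have step3K : ∀ t₁ : ℝ,
      (∫ t₂ in (0:ℝ)..t₁, Complex.exp (I * (-t₁ + t₂)) * f t₁ * f t₂ * (H t₂ * H t₂ / 2))
        = Complex.exp (-(I * t₁)) * f t₁ * (Ψ t₁ / 2) := by
    intro t₁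
    have h : ∀ t₂ : ℝ, Complex.exp (I * (-t₁ + t₂)) * f t₁ * f t₂ * (H t₂ * H t₂ / 2)
        = (Complex.exp (-(I * t₁)) * f t₁)
            * (Complex.exp (I * t₂) * f t₂ * H t₂ * H t₂ / 2) := by
      intro t₂
      rw [show I * (-(t₁:ℂ) + t₂) = -(I * t₁) + I * t₂ from by ring, Complex.exp_add]
      ring
    simp only [h]
    rw [intervalIntegral.integral_const_mul, intervalIntegral.integral_div, hΨ_def]
  -- H (2π) = 0 : explicit periodic antiderivative
  have h2pi : ∀ k : ℤ, Complex.exp ((k : ℂ) * I * ((2*π : ℝ) : ℂ)) = 1 := by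
    intro k
    rw [show ((k:ℂ) * I * ((2*π : ℝ) : ℂ)) = (k:ℂ) * (2 * (π:ℂ) * I) from by push_cast; ring]
    exact Complex.exp_int_mul_two_pi_mul_I k
  set F₀ : ℝ → ℂ := fun t : ℝ =>
      A * (I * Complex.exp ((-I) * t))
      + B * (-(Complex.exp (I * t) + Complex.exp ((-3*I) * t) / 3) / 2)
      + C * ((Complex.exp ((2*I) * t) / (2*I) - Complex.exp ((-4*I) * t) / (4*I)) / 2)
    with hF₀_def
  have hF₀ : ∀ t : ℝ, HasDerivAt F₀ (Complex.exp (-(I * t)) * f t) t := by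
    intro t
    have hd : HasDerivAt F₀
        (A * (I * ((-I) * Complex.exp ((-I) * t)))
          + B * (-(I * Complex.exp (I * t) + (-3*I) * Complex.exp ((-3*I) * t) / 3) / 2)
          + C * (((2*I) * Complex.exp ((2*I) * t) / (2*I)
              - (-4*I) * Complex.exp ((-4*I) * t) / (4*I)) / 2)) t := by
      rw [hF₀_def]
      exact ((((hexp (-I) t).const_mul I).const_mul (A:ℂ)).add
          ((((hexp I t).add ((hexp (-3*I) t).div_const 3)).neg.div_const 2).const_mul (B:ℂ))).add
        (((((hexp (2*I) t).div_const (2*I)).sub ((hexp (-4*I) t).div_const (4*I))).div_const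
            2).const_mul (C:ℂ))
    convert hd using 1
    rw [hf t]
    have hEE' : Complex.exp (-(I * (t:ℂ))) * Complex.exp (I * t) = 1 := by
      rw [← Complex.exp_add]; simp
    have e1 : Complex.exp ((-I) * (t:ℂ)) = Complex.exp (-(I * t)) := by
      rw [show (-I) * (t:ℂ) = -(I * t) from by ring]
    have e3 : Complex.exp ((-3*I) * (t:ℂ)) = Complex.exp (-(I * t)) ^ 3 := by
      rw [show (-3*I) * (t:ℂ) = (3:ℕ) * (-(I * t)) from by push_cast; ring,
        Complex.exp_nat_mul]
    have e4 : Complex.exp ((2*I) * (t:ℂ)) = (Complex.exp (I * t)) ^ 2 := by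
      rw [show (2*I) * (t:ℂ) = (2:ℕ) * (I * t) from by push_cast; ring, Complex.exp_nat_mul]
    have e5 : Complex.exp ((-4*I) * (t:ℂ)) = Complex.exp (-(I * t)) ^ 4 := by
      rw [show (-4*I) * (t:ℂ) = (4:ℕ) * (-(I * t)) from by push_cast; ring,
        Complex.exp_nat_mul]
    have e6 : (Real.sin (2*t) : ℂ)
        = (Complex.exp (-(I * t)) ^ 2 - Complex.exp (I * t) ^ 2) * I / 2 := by
      rw [Complex.ofReal_sin, Complex.sin,
        show (-(((2:ℝ)*t : ℝ)) : ℂ) * I = (2:ℕ) * (-(I * (t:ℂ))) from by push_cast; ring,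
        show ((((2:ℝ)*t : ℝ)) : ℂ) * I = (2:ℕ) * (I * (t:ℂ)) from by push_cast; ring,
        Complex.exp_nat_mul, Complex.exp_nat_mul]
    have e7 : (Real.cos (3*t) : ℂ)
        = (Complex.exp (I * t) ^ 3 + Complex.exp (-(I * t)) ^ 3) / 2 := by
      rw [Complex.ofReal_cos, Complex.cos,
        show (-(((3:ℝ)*t : ℝ)) : ℂ) * I = (3:ℕ) * (-(I * (t:ℂ))) from by push_cast; ring,
        show ((((3:ℝ)*t : ℝ)) : ℂ) * I = (3:ℕ) * (I * (t:ℂ)) from by push_cast; ring,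
        Complex.exp_nat_mul, Complex.exp_nat_mul]
    rw [e1, e3, e4, e5, e6, e7]
    have hI2 : (I:ℂ) ^ 2 = -1 := Complex.I_sq
    have hII : (I:ℂ) * I⁻¹ = 1 := mul_inv_cancel₀ Complex.I_ne_zero
    linear_combination (((C:ℂ) * Complex.exp (I * (t:ℂ)) ^ 2
      - I * (B:ℂ) * Complex.exp (I * (t:ℂ))) / 2) * hEE'
      + ((A:ℂ) * Complex.exp (-(I * (t:ℂ)))) * hI2
      + (-(((C:ℂ) * Complex.exp (-(I * (t:ℂ))) ^ 4
          + (C:ℂ) * Complex.exp (I * (t:ℂ)) ^ 2) / 2)) * hII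
  have hH2pi : H (2*π) = 0 := by
    have h := intervalIntegral.integral_eq_sub_of_hasDerivAt
      (f := F₀) (f' := fun s => Complex.exp (-(I * s)) * f s)
      (a := 0) (b := 2*π) (fun u _ => hF₀ u) (hc1.intervalIntegrable _ _)
    rw [hH_def]
    show (∫ s in (0:ℝ)..(2*π), Complex.exp (-(I * s)) * f s) = 0
    rw [h, hF₀_def]
    simp only
    have g1 : Complex.exp ((-I) * ((2*π : ℝ) : ℂ)) = 1 := by
      rw [show ((-I) * ((2*π : ℝ) : ℂ)) = ((-1 : ℤ) : ℂ) * I * ((2*π : ℝ) : ℂ) from by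
        push_cast; ring]
      exact h2pi (-1)
    have g2 : Complex.exp (I * ((2*π : ℝ) : ℂ)) = 1 := by
      rw [show (I * ((2*π : ℝ) : ℂ)) = ((1 : ℤ) : ℂ) * I * ((2*π : ℝ) : ℂ) from by
        push_cast; ring]
      exact h2pi 1
    have g3 : Complex.exp ((-3*I) * ((2*π : ℝ) : ℂ)) = 1 := by
      rw [show ((-3*I) * ((2*π : ℝ) : ℂ)) = ((-3 : ℤ) : ℂ) * I * ((2*π : ℝ) : ℂ) from by
        push_cast; ring]
      exact h2pi (-3)
    have g4 : Complex.exp ((2*I) * ((2*π : ℝ) : ℂ)) = 1 := by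
      rw [show ((2*I) * ((2*π : ℝ) : ℂ)) = ((2 : ℤ) : ℂ) * I * ((2*π : ℝ) : ℂ) from by
        push_cast; ring]
      exact h2pi 2
    have g5 : Complex.exp ((-4*I) * ((2*π : ℝ) : ℂ)) = 1 := by
      rw [show ((-4*I) * ((2*π : ℝ) : ℂ)) = ((-4 : ℤ) : ℂ) * I * ((2*π : ℝ) : ℂ) from by
        push_cast; ring]
      exact h2pi (-4)
    rw [g1, g2, g3, g4, g5]
    simp
  -- put everything together
  simp only [step1L, step2L, step3L, step1K, step2K, step3K]
  rw [eq_neg_iff_add_eq_zero]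
  have int1 : IntervalIntegrable (fun t : ℝ => Complex.exp (-(I * t)) * f t * (H t * Φ t - Ψ t))
      MeasureTheory.volume 0 (2*π) :=
    (hc1.mul ((hHc.mul hΦc).sub hΨc)).intervalIntegrable _ _
  have int2 : IntervalIntegrable (fun t : ℝ => Complex.exp (-(I * t)) * f t * (Ψ t / 2))
      MeasureTheory.volume 0 (2*π) :=
    (hc1.mul (hΨc.div_const 2)).intervalIntegrable _ _
  rw [← intervalIntegral.integral_add int1 int2]
  have hD : ∀ u ∈ Set.uIcc (0:ℝ) (2*π),
      HasDerivAt (fun y => H y * H y * Φ y / 2 - H y * Ψ y / 2)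
        (Complex.exp (-(I * u)) * f u * (H u * Φ u - Ψ u)
          + Complex.exp (-(I * u)) * f u * (Ψ u / 2)) u := by
    intro u _
    have h0 := ((((hH u).mul (hH u)).mul (hΦ u)).div_const 2).sub
      (((hH u).mul (hΨ u)).div_const 2)
    convert h0 using 1
    · rfl
    · rfl
    simp only [Pi.mul_apply]; ring
  rw [intervalIntegral.integral_eq_sub_of_hasDerivAt hD (int1.add int2)]
  simp [hH0, hH2pi]
end

section
/- Let h, ω ∈ ℝ, let H₀ = diag(h, h+ω, h+2ω), let V be the 3×3 Hermitian matrix with V₁₂ = v₁₂, V₂₁ = v̄₁₂, V₂₃ = v₂₃, V₃₂ = v̄₂₃ and all other entries zero (v₁₂, v₂₃ ∈ ℂ), and set V_t = e^{itH₀} V e^{-itH₀}. Then for all t₁, t₂, t₃, t₄ ∈ ℝ the (1,3)-entry of the product V_{t₁} V_{t₂} V_{t₃} V_{t₄} equals |v₁₂|² v₁₂ v₂₃ e^{iω(-t₁ + t₂ - t₃ - t₄)} + |v₂₃|² v₁₂ v₂₃ e^{iω(-t₁ - t₂ + t₃ - t₄)}. -/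
open Complex Matrix

theorem stmt_18 (h ω : ℝ) (v₁₂ v₂₃ : ℂ)
    (H₀ : Matrix (Fin 3) (Fin 3) ℂ)
    (hH₀ : H₀ = Matrix.diagonal ![(h:ℂ), (h:ℂ) + ω, (h:ℂ) + 2*ω])
    (V : Matrix (Fin 3) (Fin 3) ℂ)
    (hV : V = Matrix.of ![![0, v₁₂, 0], ![starRingEnd ℂ v₁₂, 0, v₂₃], ![0, starRingEnd ℂ v₂₃, 0]])
    (Vt : ℝ → Matrix (Fin 3) (Fin 3) ℂ)
    (hVt : ∀ t : ℝ, Vt t = NormedSpace.exp ((I * (t:ℂ)) • H₀) * V *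
        NormedSpace.exp ((-(I * (t:ℂ))) • H₀)) :
    ∀ t₁ t₂ t₃ t₄ : ℝ,
      (Vt t₁ * Vt t₂ * Vt t₃ * Vt t₄) 0 2 =
        ((‖v₁₂‖ : ℂ))^2 * v₁₂ * v₂₃ * Complex.exp (I * ω * (-t₁ + t₂ - t₃ - t₄))
        + ((‖v₂₃‖ : ℂ))^2 * v₁₂ * v₂₃ * Complex.exp (I * ω * (-t₁ - t₂ + t₃ - t₄)) := by
  have hVt' : ∀ t : ℝ, Vt t = Matrix.of
      ![![0, v₁₂ * Complex.exp (-(I*ω*t)), 0],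
        ![starRingEnd ℂ v₁₂ * Complex.exp (I*ω*t), 0, v₂₃ * Complex.exp (-(I*ω*t))],
        ![0, starRingEnd ℂ v₂₃ * Complex.exp (I*ω*t), 0]] := by
    intro t
    rw [hVt t, hH₀, hV]
    rw [show ((I * (t:ℂ)) • Matrix.diagonal ![(h:ℂ), (h:ℂ) + ω, (h:ℂ) + 2*ω])
        = Matrix.diagonal ((I * (t:ℂ)) • ![(h:ℂ), (h:ℂ) + ω, (h:ℂ) + 2*ω]) from
      (Matrix.diagonal_smul _ _).symm]
    rw [show ((-(I * (t:ℂ))) • Matrix.diagonal ![(h:ℂ), (h:ℂ) + ω, (h:ℂ) + 2*ω])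
        = Matrix.diagonal ((-(I * (t:ℂ))) • ![(h:ℂ), (h:ℂ) + ω, (h:ℂ) + 2*ω]) from
      (Matrix.diagonal_smul _ _).symm]
    rw [Matrix.exp_diagonal, Matrix.exp_diagonal]
    ext i j
    simp only [Matrix.mul_apply, Matrix.diagonal_apply, Pi.exp_def, Pi.smul_apply,
      Fin.sum_univ_three, ← Complex.exp_eq_exp_ℂ]
    fin_cases i <;> fin_cases j <;>
      simp [smul_eq_mul, ← Complex.exp_add]
    all_goals
      rw [mul_comm (Complex.exp _), mul_assoc, ← Complex.exp_add]
      congr 1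
      ring
  intro t₁ t₂ t₃ t₄
  rw [hVt' t₁, hVt' t₂, hVt' t₃, hVt' t₄]
  have h12 : starRingEnd ℂ v₁₂ * v₁₂ = ((‖v₁₂‖ : ℂ))^2 := by
    rw [mul_comm, Complex.mul_conj]; norm_cast; exact (Complex.sq_norm _).symm
  have h23 : starRingEnd ℂ v₂₃ * v₂₃ = ((‖v₂₃‖ : ℂ))^2 := by
    rw [mul_comm, Complex.mul_conj]; norm_cast; exact (Complex.sq_norm _).symm
  have hA : Complex.exp (I * ω * (-t₁ + t₂ - t₃ - t₄))
      = Complex.exp (-(I*ω*t₁)) * Complex.exp (I*ω*t₂) * Complex.exp (-(I*ω*t₃))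
        * Complex.exp (-(I*ω*t₄)) := by
    rw [← Complex.exp_add, ← Complex.exp_add, ← Complex.exp_add]; congr 1; push_cast; ring
  have hB : Complex.exp (I * ω * (-t₁ - t₂ + t₃ - t₄))
      = Complex.exp (-(I*ω*t₁)) * Complex.exp (-(I*ω*t₂)) * Complex.exp (I*ω*t₃)
        * Complex.exp (-(I*ω*t₄)) := by
    rw [← Complex.exp_add, ← Complex.exp_add, ← Complex.exp_add]; congr 1; push_cast; ring
  rw [hA, hB]
  simp only [Matrix.mul_apply, Fin.sum_univ_three]
  simp only [Matrix.of_apply, Matrix.cons_val', Matrix.cons_val_zero, Matrix.cons_val_one,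
    Matrix.head_cons, Matrix.cons_val_two, Matrix.tail_cons, Matrix.empty_val',
    Matrix.cons_val_fin_one, Matrix.head_fin_const]
  linear_combination (v₁₂ * v₂₃ * Complex.exp (-(I*↑ω*↑t₁)) * Complex.exp (I*↑ω*↑t₂)
      * Complex.exp (-(I*↑ω*↑t₃)) * Complex.exp (-(I*↑ω*↑t₄))) * h12
    + (v₁₂ * v₂₃ * Complex.exp (-(I*↑ω*↑t₁)) * Complex.exp (-(I*↑ω*↑t₂))
      * Complex.exp (I*↑ω*↑t₃) * Complex.exp (-(I*↑ω*↑t₄))) * h23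
end

section
/- Let ω ∈ ℝ, ω ≠ 0, and T ≥ 2π/|ω|. Then there exists a nonzero f ∈ L²([0,T], ℝ) such that: (i) ∫₀^T e^{-iω t} f(t) dt = 0; (ii) ∫₀^T ∫₀^{t₁} ∫₀^{t₂} e^{iω(t₁ - t₂ - t₃)} f(t₁) f(t₂) f(t₃) dt₃ dt₂ dt₁ = 0; (iii) ∫₀^T ∫₀^{t₁} ∫₀^{t₂} e^{iω(-t₁ + t₂ - t₃)} f(t₁) f(t₂) f(t₃) dt₃ dt₂ dt₁ = 0; and (iv) ∫₀^T ∫₀^{t₁} ∫₀^{t₂} ∫₀^{t₃} e^{iω(-t₁ + t₂ - t₃ - t₄)} f(t₁) f(t₂) f(t₃) f(t₄) dt₄ dt₃ dt₂ dt₁ ≠ 0. -/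
open Complex Real intervalIntegral MeasureTheory

set_option maxHeartbeats 2000000

noncomputable def eA (ω t : ℝ) : ℂ := Complex.exp (I * ω * t)
noncomputable def eB (ω t : ℝ) : ℂ := Complex.exp (-(I * ω * t))

lemma eA_ne (ω t : ℝ) : eA ω t ≠ 0 := Complex.exp_ne_zero _

lemma eB_eq_inv (ω t : ℝ) : eB ω t = (eA ω t)⁻¹ := by
  rw [eA, eB, ← Complex.exp_neg]

lemma eA_hasDeriv (ω t : ℝ) : HasDerivAt (eA ω) (I * ω * eA ω t) t := by
  have h : HasDerivAt (fun s : ℝ => I * (ω:ℂ) * (s:ℂ)) (I * (ω:ℂ)) t := by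
    simpa using (Complex.ofRealCLM.hasDerivAt (x := t)).const_mul (I * (ω:ℂ))
  have h2 := h.cexp
  unfold eA
  convert h2 using 1
  ring

lemma eB_hasDeriv (ω t : ℝ) : HasDerivAt (eB ω) (-(I * ω) * eB ω t) t := by
  have h : HasDerivAt (fun s : ℝ => -(I * (ω:ℂ) * (s:ℂ))) (-(I * (ω:ℂ))) t := by
    simpa [Pi.neg_def] using ((Complex.ofRealCLM.hasDerivAt (x := t)).const_mul (I * (ω:ℂ))).neg
  have h2 := h.cexp
  unfold eB
  convert h2 using 1
  ring

lemma eA_pow_hasDeriv (ω : ℝ) (n : ℕ) (t : ℝ) :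
    HasDerivAt (fun x : ℝ => eA ω x ^ n) (((n:ℕ) : ℂ) * (I * (ω:ℂ)) * eA ω t ^ n) t := by
  induction n with
  | zero => simpa using hasDerivAt_const t (1:ℂ)
  | succ m ih =>
    have h := ih.mul (eA_hasDeriv ω t)
    simp only [Pi.mul_def, ← pow_succ] at h
    refine h.congr_deriv ?_
    push_cast
    ring

lemma eB_pow_hasDeriv (ω : ℝ) (n : ℕ) (t : ℝ) :
    HasDerivAt (fun x : ℝ => eB ω x ^ n) (((n:ℕ) : ℂ) * (-(I * (ω:ℂ))) * eB ω t ^ n) t := by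
  induction n with
  | zero => simpa using hasDerivAt_const t (1:ℂ)
  | succ m ih =>
    have h := ih.mul (eB_hasDeriv ω t)
    simp only [Pi.mul_def, ← pow_succ] at h
    refine h.congr_deriv ?_
    push_cast
    ring

lemma hd_A (ω : ℝ) (c : ℂ) (n : ℕ) (t : ℝ) :
    HasDerivAt (fun x : ℝ => c * eA ω x ^ n) (c * ((n:ℕ) : ℂ) * (I * (ω:ℂ) * eA ω t ^ n)) t := by
  have h := (eA_pow_hasDeriv ω n t).const_mul c
  refine h.congr_deriv ?_
  ring

lemma hd_B (ω : ℝ) (c : ℂ) (n : ℕ) (t : ℝ) :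
    HasDerivAt (fun x : ℝ => c * eB ω x ^ n) (c * ((n:ℕ) : ℂ) * (-(I * (ω:ℂ) * eB ω t ^ n))) t := by
  have h := (eB_pow_hasDeriv ω n t).const_mul c
  refine h.congr_deriv ?_
  ring

lemma hd_ofReal (c : ℂ) (t : ℝ) : HasDerivAt (fun x : ℝ => c * (x:ℂ)) c t := by
  simpa using (Complex.ofRealCLM.hasDerivAt (x := t)).const_mul c

lemma hd_xA (ω : ℝ) (c : ℂ) (n : ℕ) (t : ℝ) :
    HasDerivAt (fun x : ℝ => c * (x:ℂ) * eA ω x ^ n)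
      (c * eA ω t ^ n + c * (t:ℂ) * ((n:ℕ) : ℂ) * (I * (ω:ℂ) * eA ω t ^ n)) t := by
  have h := (hd_ofReal c t).mul (eA_pow_hasDeriv ω n t)
  refine h.congr_deriv ?_
  ring

lemma hd_xB (ω : ℝ) (c : ℂ) (n : ℕ) (t : ℝ) :
    HasDerivAt (fun x : ℝ => c * (x:ℂ) * eB ω x ^ n)
      (c * eB ω t ^ n + c * (t:ℂ) * ((n:ℕ) : ℂ) * (-(I * (ω:ℂ) * eB ω t ^ n))) t := by
  have h := (hd_ofReal c t).mul (eB_pow_hasDeriv ω n t)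
  refine h.congr_deriv ?_
  ring

noncomputable def FC (ω x : ℝ) : ℂ := 1 + ((3:ℂ)/2) * eA ω x ^ 2 + ((3:ℂ)/2) * eB ω x ^ 2

noncomputable def Gf (ω x : ℝ) : ℂ :=
    (((1 : ℂ)/2) * I * (ω:ℂ)⁻¹ ^ 1) * eB ω x ^ 3
      + ((1 : ℂ) * I * (ω:ℂ)⁻¹ ^ 1) * eB ω x ^ 1
      + (((-3 : ℂ)/2) * I * (ω:ℂ)⁻¹ ^ 1) * eA ω x ^ 1

lemma Gf_hasDeriv (ω : ℝ) (t : ℝ) :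
    HasDerivAt (Gf ω)
      ((((1 : ℂ)/2) * I * (ω:ℂ)⁻¹ ^ 1) * ((3:ℕ) : ℂ) * (-(I * (ω:ℂ) * eB ω t ^ 3)) + ((1 : ℂ) * I * (ω:ℂ)⁻¹ ^ 1) * ((1:ℕ) : ℂ) * (-(I * (ω:ℂ) * eB ω t ^ 1)) + (((-3 : ℂ)/2) * I * (ω:ℂ)⁻¹ ^ 1) * ((1:ℕ) : ℂ) * (I * (ω:ℂ) * eA ω t ^ 1)) t := by
  exact (((hd_B ω (((1 : ℂ)/2) * I * (ω:ℂ)⁻¹ ^ 1) 3 t).add (hd_B ω ((1 : ℂ) * I * (ω:ℂ)⁻¹ ^ 1) 1 t)).add (hd_A ω (((-3 : ℂ)/2) * I * (ω:ℂ)⁻¹ ^ 1) 1 t))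

lemma Gf_zero (ω : ℝ) : Gf ω 0 = 0 := by
  simp only [Gf, eA, eB, Complex.ofReal_zero, mul_zero, neg_zero, Complex.exp_zero]
  ring

noncomputable def H2 (ω x : ℝ) : ℂ :=
    (((-1 : ℂ)/8) * (ω:ℂ)⁻¹ ^ 2) * eB ω x ^ 6
      + (((-1 : ℂ)/2) * (ω:ℂ)⁻¹ ^ 2) * eB ω x ^ 4
      + (((1 : ℂ)/4) * (ω:ℂ)⁻¹ ^ 2) * eB ω x ^ 2
      + (((3 : ℂ)/2) * (ω:ℂ)⁻¹ ^ 2) * eA ω x ^ 0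
      + (((-9 : ℂ)/8) * (ω:ℂ)⁻¹ ^ 2) * eA ω x ^ 2

lemma H2_hasDeriv (ω : ℝ) (t : ℝ) :
    HasDerivAt (H2 ω)
      ((((-1 : ℂ)/8) * (ω:ℂ)⁻¹ ^ 2) * ((6:ℕ) : ℂ) * (-(I * (ω:ℂ) * eB ω t ^ 6)) + (((-1 : ℂ)/2) * (ω:ℂ)⁻¹ ^ 2) * ((4:ℕ) : ℂ) * (-(I * (ω:ℂ) * eB ω t ^ 4)) + (((1 : ℂ)/4) * (ω:ℂ)⁻¹ ^ 2) * ((2:ℕ) : ℂ) * (-(I * (ω:ℂ) * eB ω t ^ 2)) + (((3 : ℂ)/2) * (ω:ℂ)⁻¹ ^ 2) * ((0:ℕ) : ℂ) * (I * (ω:ℂ) * eA ω t ^ 0) + (((-9 : ℂ)/8) * (ω:ℂ)⁻¹ ^ 2) * ((2:ℕ) : ℂ) * (I * (ω:ℂ) * eA ω t ^ 2)) t := by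
  exact (((((hd_B ω (((-1 : ℂ)/8) * (ω:ℂ)⁻¹ ^ 2) 6 t).add (hd_B ω (((-1 : ℂ)/2) * (ω:ℂ)⁻¹ ^ 2) 4 t)).add (hd_B ω (((1 : ℂ)/4) * (ω:ℂ)⁻¹ ^ 2) 2 t)).add (hd_A ω (((3 : ℂ)/2) * (ω:ℂ)⁻¹ ^ 2) 0 t)).add (hd_A ω (((-9 : ℂ)/8) * (ω:ℂ)⁻¹ ^ 2) 2 t))

lemma H2_zero (ω : ℝ) : H2 ω 0 = 0 := by
  simp only [H2, eA, eB, Complex.ofReal_zero, mul_zero, neg_zero, Complex.exp_zero]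
  ring

noncomputable def H3 (ω x : ℝ) : ℂ :=
    (((-3 : ℂ)/16) * (ω:ℂ)⁻¹ ^ 2) * eB ω x ^ 4
      + ((-1 : ℂ) * (ω:ℂ)⁻¹ ^ 2) * eB ω x ^ 2
      + (((7 : ℂ)/4) * (ω:ℂ)⁻¹ ^ 2) * eA ω x ^ 0
      + (((-9 : ℂ)/16) * (ω:ℂ)⁻¹ ^ 2) * eA ω x ^ 4
      + (((-1 : ℂ)/2) * I * (ω:ℂ)⁻¹ ^ 1) * (x:ℂ) * eB ω x ^ 0

lemma H3_hasDeriv (ω : ℝ) (t : ℝ) :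
    HasDerivAt (H3 ω)
      ((((-3 : ℂ)/16) * (ω:ℂ)⁻¹ ^ 2) * ((4:ℕ) : ℂ) * (-(I * (ω:ℂ) * eB ω t ^ 4)) + ((-1 : ℂ) * (ω:ℂ)⁻¹ ^ 2) * ((2:ℕ) : ℂ) * (-(I * (ω:ℂ) * eB ω t ^ 2)) + (((7 : ℂ)/4) * (ω:ℂ)⁻¹ ^ 2) * ((0:ℕ) : ℂ) * (I * (ω:ℂ) * eA ω t ^ 0) + (((-9 : ℂ)/16) * (ω:ℂ)⁻¹ ^ 2) * ((4:ℕ) : ℂ) * (I * (ω:ℂ) * eA ω t ^ 4) + ((((-1 : ℂ)/2) * I * (ω:ℂ)⁻¹ ^ 1) * eB ω t ^ 0 + (((-1 : ℂ)/2) * I * (ω:ℂ)⁻¹ ^ 1) * (t:ℂ) * ((0:ℕ) : ℂ) * (-(I * (ω:ℂ) * eB ω t ^ 0)))) t := by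
  exact (((((hd_B ω (((-3 : ℂ)/16) * (ω:ℂ)⁻¹ ^ 2) 4 t).add (hd_B ω ((-1 : ℂ) * (ω:ℂ)⁻¹ ^ 2) 2 t)).add (hd_A ω (((7 : ℂ)/4) * (ω:ℂ)⁻¹ ^ 2) 0 t)).add (hd_A ω (((-9 : ℂ)/16) * (ω:ℂ)⁻¹ ^ 2) 4 t)).add (hd_xB ω (((-1 : ℂ)/2) * I * (ω:ℂ)⁻¹ ^ 1) 0 t))

lemma H3_zero (ω : ℝ) : H3 ω 0 = 0 := by
  simp only [H3, eA, eB, Complex.ofReal_zero, mul_zero, neg_zero, Complex.exp_zero]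
  ring

noncomputable def Kf (ω x : ℝ) : ℂ :=
    (((-3 : ℂ)/112) * I * (ω:ℂ)⁻¹ ^ 3) * eB ω x ^ 7
      + (((-7 : ℂ)/40) * I * (ω:ℂ)⁻¹ ^ 3) * eB ω x ^ 5
      + (((-5 : ℂ)/48) * I * (ω:ℂ)⁻¹ ^ 3) * eB ω x ^ 3
      + (((7 : ℂ)/4) * I * (ω:ℂ)⁻¹ ^ 3) * eB ω x ^ 1
      + (((-128 : ℂ)/105) * I * (ω:ℂ)⁻¹ ^ 3) * eA ω x ^ 0
      + (((-3 : ℂ)/16) * I * (ω:ℂ)⁻¹ ^ 3) * eA ω x ^ 1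
      + (((-3 : ℂ)/8) * I * (ω:ℂ)⁻¹ ^ 3) * eA ω x ^ 3
      + (((27 : ℂ)/80) * I * (ω:ℂ)⁻¹ ^ 3) * eA ω x ^ 5

lemma Kf_hasDeriv (ω : ℝ) (t : ℝ) :
    HasDerivAt (Kf ω)
      ((((-3 : ℂ)/112) * I * (ω:ℂ)⁻¹ ^ 3) * ((7:ℕ) : ℂ) * (-(I * (ω:ℂ) * eB ω t ^ 7)) + (((-7 : ℂ)/40) * I * (ω:ℂ)⁻¹ ^ 3) * ((5:ℕ) : ℂ) * (-(I * (ω:ℂ) * eB ω t ^ 5)) + (((-5 : ℂ)/48) * I * (ω:ℂ)⁻¹ ^ 3) * ((3:ℕ) : ℂ) * (-(I * (ω:ℂ) * eB ω t ^ 3)) + (((7 : ℂ)/4) * I * (ω:ℂ)⁻¹ ^ 3) * ((1:ℕ) : ℂ) * (-(I * (ω:ℂ) * eB ω t ^ 1)) + (((-128 : ℂ)/105) * I * (ω:ℂ)⁻¹ ^ 3) * ((0:ℕ) : ℂ) * (I * (ω:ℂ) * eA ω t ^ 0) + (((-3 : ℂ)/16) * I * (ω:ℂ)⁻¹ ^ 3)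 * ((1:ℕ) : ℂ) * (I * (ω:ℂ) * eA ω t ^ 1) + (((-3 : ℂ)/8) * I * (ω:ℂ)⁻¹ ^ 3) * ((3:ℕ) : ℂ) * (I * (ω:ℂ) * eA ω t ^ 3) + (((27 : ℂ)/80) * I * (ω:ℂ)⁻¹ ^ 3) * ((5:ℕ) : ℂ) * (I * (ω:ℂ) * eA ω t ^ 5)) t := by
  exact ((((((((hd_B ω (((-3 : ℂ)/112) * I * (ω:ℂ)⁻¹ ^ 3) 7 t).add (hd_B ω (((-7 : ℂ)/40) * I * (ω:ℂ)⁻¹ ^ 3) 5 t)).add (hd_B ω (((-5 : ℂ)/48) * I * (ω:ℂ)⁻¹ ^ 3) 3 t)).add (hd_B ω (((7 : ℂ)/4) * I * (ω:ℂ)⁻¹ ^ 3) 1 t)).add (hd_A ω (((-128 : ℂ)/105) * I * (ω:ℂ)⁻¹ ^ 3) 0 t)).add (hd_A ω (((-3 : ℂ)/16) * I * (ω:ℂ)⁻¹ ^ 3) 1 t)).add (hd_A ω (((-3 : ℂ)/8) * I * (ω:ℂ)⁻¹ ^ 3) 3 t)).add (hd_A ω (((27 : ℂ)/80) * I * (ω:ℂ)⁻¹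 ^ 3) 5 t))

lemma Kf_zero (ω : ℝ) : Kf ω 0 = 0 := by
  simp only [Kf, eA, eB, Complex.ofReal_zero, mul_zero, neg_zero, Complex.exp_zero]
  ring

noncomputable def PhiIII (ω x : ℝ) : ℂ :=
    (((-9 : ℂ)/224) * I * (ω:ℂ)⁻¹ ^ 3) * eB ω x ^ 7
      + (((-27 : ℂ)/80) * I * (ω:ℂ)⁻¹ ^ 3) * eB ω x ^ 5
      + (((35 : ℂ)/96) * I * (ω:ℂ)⁻¹ ^ 3) * eB ω x ^ 3
      + (((-1 : ℂ)/4) * I * (ω:ℂ)⁻¹ ^ 3) * eB ω x ^ 1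
      + (((256 : ℂ)/105) * I * (ω:ℂ)⁻¹ ^ 3) * eA ω x ^ 0
      + (((-81 : ℂ)/32) * I * (ω:ℂ)⁻¹ ^ 3) * eA ω x ^ 1
      + (((3 : ℂ)/16) * I * (ω:ℂ)⁻¹ ^ 3) * eA ω x ^ 3
      + (((27 : ℂ)/160) * I * (ω:ℂ)⁻¹ ^ 3) * eA ω x ^ 5
      + (((1 : ℂ)/4) * (ω:ℂ)⁻¹ ^ 2) * (x:ℂ) * eB ω x ^ 3
      + (((1 : ℂ)/2) * (ω:ℂ)⁻¹ ^ 2) * (x:ℂ) * eB ω x ^ 1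
      + (((-3 : ℂ)/4) * (ω:ℂ)⁻¹ ^ 2) * (x:ℂ) * eA ω x ^ 1

lemma PhiIII_hasDeriv (ω : ℝ) (t : ℝ) :
    HasDerivAt (PhiIII ω)
      ((((-9 : ℂ)/224) * I * (ω:ℂ)⁻¹ ^ 3) * ((7:ℕ) : ℂ) * (-(I * (ω:ℂ) * eB ω t ^ 7)) + (((-27 : ℂ)/80) * I * (ω:ℂ)⁻¹ ^ 3) * ((5:ℕ) : ℂ) * (-(I * (ω:ℂ) * eB ω t ^ 5)) + (((35 : ℂ)/96) * I * (ω:ℂ)⁻¹ ^ 3) * ((3:ℕ) : ℂ) * (-(I * (ω:ℂ) * eB ω t ^ 3)) + (((-1 : ℂ)/4) * I * (ω:ℂ)⁻¹ ^ 3) * ((1:ℕ) : ℂ) * (-(I * (ω:ℂ) * eB ω t ^ 1)) + (((256 : ℂ)/105) * I * (ω:ℂ)⁻¹ ^ 3) * ((0:ℕ) : ℂ) * (I * (ω:ℂ) * eA ω t ^ 0) + (((-81 : ℂ)/32) * I * (ω:ℂ)⁻¹ ^ 3) * ((1:ℕ) : ℂ) * (I * (ω:ℂ) * eA ω t ^ 1)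 + (((3 : ℂ)/16) * I * (ω:ℂ)⁻¹ ^ 3) * ((3:ℕ) : ℂ) * (I * (ω:ℂ) * eA ω t ^ 3) + (((27 : ℂ)/160) * I * (ω:ℂ)⁻¹ ^ 3) * ((5:ℕ) : ℂ) * (I * (ω:ℂ) * eA ω t ^ 5) + ((((1 : ℂ)/4) * (ω:ℂ)⁻¹ ^ 2) * eB ω t ^ 3 + (((1 : ℂ)/4) * (ω:ℂ)⁻¹ ^ 2) * (t:ℂ) * ((3:ℕ) : ℂ) * (-(I * (ω:ℂ) * eB ω t ^ 3))) + ((((1 : ℂ)/2) * (ω:ℂ)⁻¹ ^ 2) * eB ω t ^ 1 + (((1 : ℂ)/2) * (ω:ℂ)⁻¹ ^ 2) * (t:ℂ) * ((1:ℕ) : ℂ) * (-(I * (ω:ℂ) * eB ω t ^ 1))) + ((((-3 : ℂ)/4) * (ω:ℂ)⁻¹ ^ 2) * eA ω t ^ 1 + (((-3 : ℂ)/4) * (ω:ℂ)⁻¹ ^ 2) * (t:ℂ) * ((1:ℕ) : ℂ) * (I * (ω:ℂ) * eA ω t ^ 1))) t := by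
  exact (((((((((((hd_B ω (((-9 : ℂ)/224) * I * (ω:ℂ)⁻¹ ^ 3) 7 t).add (hd_B ω (((-27 : ℂ)/80) * I * (ω:ℂ)⁻¹ ^ 3) 5 t)).add (hd_B ω (((35 : ℂ)/96) * I * (ω:ℂ)⁻¹ ^ 3) 3 t)).add (hd_B ω (((-1 : ℂ)/4) * I * (ω:ℂ)⁻¹ ^ 3) 1 t)).add (hd_A ω (((256 : ℂ)/105) * I * (ω:ℂ)⁻¹ ^ 3) 0 t)).add (hd_A ω (((-81 : ℂ)/32) * I * (ω:ℂ)⁻¹ ^ 3) 1 t)).add (hd_A ω (((3 : ℂ)/16) * I * (ω:ℂ)⁻¹ ^ 3) 3 t)).add (hd_A ω (((27 : ℂ)/160) * I * (ω:ℂ)⁻¹ ^ 3) 5 t)).add (hd_xB ω (((1 : ℂ)/4) * (ω:ℂ)⁻¹ ^ 2) 3 t)).add (hd_xB ω (((1 : ℂ)/2) * (ω:ℂ)⁻¹ ^ 2) 1 t)).add (hd_xA ω (((-3 : ℂ)/4) * (ω:ℂ)⁻¹ ^ 2) 1 t))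

lemma PhiIII_zero (ω : ℝ) : PhiIII ω 0 = 0 := by
  simp only [PhiIII, eA, eB, Complex.ofReal_zero, mul_zero, neg_zero, Complex.exp_zero]
  ring

noncomputable def PhiIV (ω x : ℝ) : ℂ :=
    (((9 : ℂ)/2240) * (ω:ℂ)⁻¹ ^ 4) * eB ω x ^ 10
      + (((81 : ℂ)/2240) * (ω:ℂ)⁻¹ ^ 4) * eB ω x ^ 8
      + (((13 : ℂ)/210) * (ω:ℂ)⁻¹ ^ 4) * eB ω x ^ 6
      + (((-271 : ℂ)/480) * (ω:ℂ)⁻¹ ^ 4) * eB ω x ^ 4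
      + (((64 : ℂ)/105) * (ω:ℂ)⁻¹ ^ 4) * eB ω x ^ 3
      + (((-21 : ℂ)/32) * (ω:ℂ)⁻¹ ^ 4) * eB ω x ^ 2
      + (((128 : ℂ)/105) * (ω:ℂ)⁻¹ ^ 4) * eB ω x ^ 1
      + (((373 : ℂ)/320) * (ω:ℂ)⁻¹ ^ 4) * eA ω x ^ 0
      + (((-64 : ℂ)/35) * (ω:ℂ)⁻¹ ^ 4) * eA ω x ^ 1
      + (((-3 : ℂ)/40) * (ω:ℂ)⁻¹ ^ 4) * eA ω x ^ 2
      + (((-9 : ℂ)/160) * (ω:ℂ)⁻¹ ^ 4) * eA ω x ^ 4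
      + (((27 : ℂ)/320) * (ω:ℂ)⁻¹ ^ 4) * eA ω x ^ 6
      + (((15 : ℂ)/8) * I * (ω:ℂ)⁻¹ ^ 3) * (x:ℂ) * eB ω x ^ 0

lemma PhiIV_hasDeriv (ω : ℝ) (t : ℝ) :
    HasDerivAt (PhiIV ω)
      ((((9 : ℂ)/2240) * (ω:ℂ)⁻¹ ^ 4) * ((10:ℕ) : ℂ) * (-(I * (ω:ℂ) * eB ω t ^ 10)) + (((81 : ℂ)/2240) * (ω:ℂ)⁻¹ ^ 4) * ((8:ℕ) : ℂ) * (-(I * (ω:ℂ) * eB ω t ^ 8)) + (((13 : ℂ)/210) * (ω:ℂ)⁻¹ ^ 4) * ((6:ℕ) : ℂ) * (-(I * (ω:ℂ) * eB ω t ^ 6)) + (((-271 : ℂ)/480) * (ω:ℂ)⁻¹ ^ 4) * ((4:ℕ) : ℂ) * (-(I * (ω:ℂ) * eB ω t ^ 4)) + (((64 : ℂ)/105) * (ω:ℂ)⁻¹ ^ 4) * ((3:ℕ) : ℂ) * (-(I * (ω:ℂ) * eB ω t ^ 3)) + (((-21 : ℂ)/32) * (ω:ℂ)⁻¹ ^ 4)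 * ((2:ℕ) : ℂ) * (-(I * (ω:ℂ) * eB ω t ^ 2)) + (((128 : ℂ)/105) * (ω:ℂ)⁻¹ ^ 4) * ((1:ℕ) : ℂ) * (-(I * (ω:ℂ) * eB ω t ^ 1)) + (((373 : ℂ)/320) * (ω:ℂ)⁻¹ ^ 4) * ((0:ℕ) : ℂ) * (I * (ω:ℂ) * eA ω t ^ 0) + (((-64 : ℂ)/35) * (ω:ℂ)⁻¹ ^ 4) * ((1:ℕ) : ℂ) * (I * (ω:ℂ) * eA ω t ^ 1) + (((-3 : ℂ)/40) * (ω:ℂ)⁻¹ ^ 4) * ((2:ℕ) : ℂ) * (I * (ω:ℂ) * eA ω t ^ 2) + (((-9 : ℂ)/160) * (ω:ℂ)⁻¹ ^ 4) * ((4:ℕ) : ℂ) * (I * (ω:ℂ) * eA ω t ^ 4) + (((27 : ℂ)/320) * (ω:ℂ)⁻¹ ^ 4) * ((6:ℕ) : ℂ) * (I * (ω:ℂ) * eA ω t ^ 6) + ((((15 : ℂ)/8) * I * (ω:ℂ)⁻¹ ^ 3) * eB ω t ^ 0 + (((15 : ℂ)/8) * I * (ω:ℂ)⁻¹ ^ 3)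 * (t:ℂ) * ((0:ℕ) : ℂ) * (-(I * (ω:ℂ) * eB ω t ^ 0)))) t := by
  exact (((((((((((((hd_B ω (((9 : ℂ)/2240) * (ω:ℂ)⁻¹ ^ 4) 10 t).add (hd_B ω (((81 : ℂ)/2240) * (ω:ℂ)⁻¹ ^ 4) 8 t)).add (hd_B ω (((13 : ℂ)/210) * (ω:ℂ)⁻¹ ^ 4) 6 t)).add (hd_B ω (((-271 : ℂ)/480) * (ω:ℂ)⁻¹ ^ 4) 4 t)).add (hd_B ω (((64 : ℂ)/105) * (ω:ℂ)⁻¹ ^ 4) 3 t)).add (hd_B ω (((-21 : ℂ)/32) * (ω:ℂ)⁻¹ ^ 4) 2 t)).add (hd_B ω (((128 : ℂ)/105) * (ω:ℂ)⁻¹ ^ 4) 1 t)).add (hd_A ω (((373 : ℂ)/320) * (ω:ℂ)⁻¹ ^ 4) 0 t)).add (hd_A ω (((-64 : ℂ)/35) * (ω:ℂ)⁻¹ ^ 4) 1 t)).add (hd_A ω (((-3 : ℂ)/40) * (ω:ℂ)⁻¹ ^ 4) 2 t)).add (hd_A ω (((-9 : ℂ)/160) * (ω:ℂ)⁻¹ ^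 4) 4 t)).add (hd_A ω (((27 : ℂ)/320) * (ω:ℂ)⁻¹ ^ 4) 6 t)).add (hd_xB ω (((15 : ℂ)/8) * I * (ω:ℂ)⁻¹ ^ 3) 0 t))

lemma PhiIV_zero (ω : ℝ) : PhiIV ω 0 = 0 := by
  simp only [PhiIV, eA, eB, Complex.ofReal_zero, mul_zero, neg_zero, Complex.exp_zero]
  ring

lemma Gf_eval (ω x : ℝ) (hA1 : eA ω x = 1) (hB1 : eB ω x = 1) :
    Gf ω x = 0 := by
  simp only [Gf, hA1, hB1, one_pow]
  ring

lemma Kf_eval (ω x : ℝ) (hA1 : eA ω x = 1) (hB1 : eB ω x = 1) :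
    Kf ω x = 0 := by
  simp only [Kf, hA1, hB1, one_pow]
  ring

lemma PhiIII_eval (ω x : ℝ) (hA1 : eA ω x = 1) (hB1 : eB ω x = 1) :
    PhiIII ω x = 0 := by
  simp only [PhiIII, hA1, hB1, one_pow]
  ring

lemma PhiIV_eval (ω x : ℝ) (hA1 : eA ω x = 1) (hB1 : eB ω x = 1) :
    PhiIV ω x = ((15:ℂ)/8) * I * (x:ℂ) * (ω:ℂ)⁻¹ ^ 3 := by
  simp only [PhiIV, hA1, hB1, one_pow]
  ring

lemma cont_LG (ω : ℝ) : Continuous (fun t : ℝ => eB ω t * FC ω t) := by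
  unfold FC eA eB
  fun_prop

lemma LG (ω : ℝ) (hω : ω ≠ 0) (x : ℝ) :
    ∫ t in (0:ℝ)..x, eB ω t * FC ω t = Gf ω x := by
  have hωC : (ω:ℂ) ≠ 0 := Complex.ofReal_ne_zero.mpr hω
  have hd : ∀ t ∈ Set.uIcc (0:ℝ) x, HasDerivAt (Gf ω) ((fun t => eB ω t * FC ω t) t) t := by
    intro t _
    convert Gf_hasDeriv ω t using 1
    have hab : eA ω t * eB ω t = 1 := by
      rw [eA, eB, ← Complex.exp_add]; simp
    have hw : (ω:ℂ) * (ω:ℂ)⁻¹ = 1 := mul_inv_cancel₀ hωC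
    have hI : I * I = -1 := Complex.I_mul_I
    simp only [FC]
    push_cast
    linear_combination (((3 : ℂ)/2) * eA ω t ^ 1) * hab + ((-1 : ℂ) * eB ω t ^ 1 + ((-3 : ℂ)/2) * eB ω t ^ 3 + ((-3 : ℂ)/2) * eA ω t ^ 1) * hw + ((1 : ℂ) * eB ω t ^ 1 * (ω:ℂ) ^ 1 * (ω:ℂ)⁻¹ ^ 1 + ((3 : ℂ)/2) * eB ω t ^ 3 * (ω:ℂ) ^ 1 * (ω:ℂ)⁻¹ ^ 1 + ((3 : ℂ)/2) * eA ω t ^ 1 * (ω:ℂ) ^ 1 * (ω:ℂ)⁻¹ ^ 1) * hI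
  have hi : IntervalIntegrable (fun t : ℝ => eB ω t * FC ω t) volume 0 x :=
    (cont_LG ω).intervalIntegrable 0 x
  rw [intervalIntegral.integral_eq_sub_of_hasDerivAt hd hi, Gf_zero ω, sub_zero]

lemma cont_LH2 (ω : ℝ) : Continuous (fun t : ℝ => eB ω t * FC ω t * Gf ω t) := by
  unfold FC Gf eA eB
  fun_prop

lemma LH2 (ω : ℝ) (hω : ω ≠ 0) (x : ℝ) :
    ∫ t in (0:ℝ)..x, eB ω t * FC ω t * Gf ω t = H2 ω x := by
  have hωC : (ω:ℂ) ≠ 0 := Complex.ofReal_ne_zero.mpr hω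
  have hd : ∀ t ∈ Set.uIcc (0:ℝ) x, HasDerivAt (H2 ω) ((fun t => eB ω t * FC ω t * Gf ω t) t) t := by
    intro t _
    convert H2_hasDeriv ω t using 1
    have hab : eA ω t * eB ω t = 1 := by
      rw [eA, eB, ← Complex.exp_add]; simp
    have hw : (ω:ℂ) * (ω:ℂ)⁻¹ = 1 := mul_inv_cancel₀ hωC
    have hI : I * I = -1 := Complex.I_mul_I
    simp only [FC, Gf]
    push_cast
    linear_combination (((-3 : ℂ)/2) * I * eB ω t ^ 2 * (ω:ℂ)⁻¹ ^ 1 + ((3 : ℂ)/2) * I * eA ω t ^ 1 * eB ω t ^ 1 * (ω:ℂ)⁻¹ ^ 1 + ((3 : ℂ)/4) * I * eA ω t ^ 1 * eB ω t ^ 3 * (ω:ℂ)⁻¹ ^ 1 + ((-9 : ℂ)/4) * I * eA ω t ^ 2 * (ω:ℂ)⁻¹ ^ 1) * hab + (((1 : ℂ)/2) * I * eB ω t ^ 2 * (ω:ℂ)⁻¹ ^ 1 + (-2 : ℂ) * I * eB ω t ^ 4 * (ω:ℂ)⁻¹ ^ 1 + ((-3 : ℂ)/4) * I * eB ω t ^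 6 * (ω:ℂ)⁻¹ ^ 1 + ((9 : ℂ)/4) * I * eA ω t ^ 2 * (ω:ℂ)⁻¹ ^ 1) * hw
  have hi : IntervalIntegrable (fun t : ℝ => eB ω t * FC ω t * Gf ω t) volume 0 x :=
    (cont_LH2 ω).intervalIntegrable 0 x
  rw [intervalIntegral.integral_eq_sub_of_hasDerivAt hd hi, H2_zero ω, sub_zero]

lemma cont_LH3 (ω : ℝ) : Continuous (fun t : ℝ => eA ω t * FC ω t * Gf ω t) := by
  unfold FC Gf eA eB
  fun_prop

lemma LH3 (ω : ℝ) (hω : ω ≠ 0) (x : ℝ) :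
    ∫ t in (0:ℝ)..x, eA ω t * FC ω t * Gf ω t = H3 ω x := by
  have hωC : (ω:ℂ) ≠ 0 := Complex.ofReal_ne_zero.mpr hω
  have hd : ∀ t ∈ Set.uIcc (0:ℝ) x, HasDerivAt (H3 ω) ((fun t => eA ω t * FC ω t * Gf ω t) t) t := by
    intro t _
    convert H3_hasDeriv ω t using 1
    have hab : eA ω t * eB ω t = 1 := by
      rw [eA, eB, ← Complex.exp_add]; simp
    have hw : (ω:ℂ) * (ω:ℂ)⁻¹ = 1 := mul_inv_cancel₀ hωC
    have hI : I * I = -1 := Complex.I_mul_I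
    simp only [FC, Gf]
    push_cast
    linear_combination (((-1 : ℂ)/2) * I * (ω:ℂ)⁻¹ ^ 1 + (2 : ℂ) * I * eB ω t ^ 2 * (ω:ℂ)⁻¹ ^ 1 + ((3 : ℂ)/4) * I * eB ω t ^ 4 * (ω:ℂ)⁻¹ ^ 1 + ((-3 : ℂ)/2) * I * eA ω t ^ 1 * eB ω t ^ 1 * (ω:ℂ)⁻¹ ^ 1 + ((3 : ℂ)/2) * I * eA ω t ^ 2 * (ω:ℂ)⁻¹ ^ 1 + ((3 : ℂ)/4) * I * eA ω t ^ 2 * eB ω t ^ 2 * (ω:ℂ)⁻¹ ^ 1) * hab + ((-2 : ℂ) * I * eB ω t ^ 2 * (ω:ℂ)⁻¹ ^ 1 + ((-3 : ℂ)/4) * I * eB ω t ^ 4 * (ω:ℂ)⁻¹ ^ 1 + ((9 : ℂ)/4) * I * eA ω t ^ 4 * (ω:ℂ)⁻¹ ^ 1) * hw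
  have hi : IntervalIntegrable (fun t : ℝ => eA ω t * FC ω t * Gf ω t) volume 0 x :=
    (cont_LH3 ω).intervalIntegrable 0 x
  rw [intervalIntegral.integral_eq_sub_of_hasDerivAt hd hi, H3_zero ω, sub_zero]

lemma cont_LK (ω : ℝ) : Continuous (fun t : ℝ => eA ω t * FC ω t * H2 ω t) := by
  unfold FC H2 eA eB
  fun_prop

lemma LK (ω : ℝ) (hω : ω ≠ 0) (x : ℝ) :
    ∫ t in (0:ℝ)..x, eA ω t * FC ω t * H2 ω t = Kf ω x := by
  have hωC : (ω:ℂ) ≠ 0 := Complex.ofReal_ne_zero.mpr hω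
  have hd : ∀ t ∈ Set.uIcc (0:ℝ) x, HasDerivAt (Kf ω) ((fun t => eA ω t * FC ω t * H2 ω t) t) t := by
    intro t _
    convert Kf_hasDeriv ω t using 1
    have hab : eA ω t * eB ω t = 1 := by
      rw [eA, eB, ← Complex.exp_add]; simp
    have hw : (ω:ℂ) * (ω:ℂ)⁻¹ = 1 := mul_inv_cancel₀ hωC
    have hI : I * I = -1 := Complex.I_mul_I
    simp only [FC, H2]
    push_cast
    linear_combination (((7 : ℂ)/4) * eB ω t ^ 1 * (ω:ℂ)⁻¹ ^ 2 + ((-5 : ℂ)/16) * eB ω t ^ 3 * (ω:ℂ)⁻¹ ^ 2 + ((-7 : ℂ)/8) * eB ω t ^ 5 * (ω:ℂ)⁻¹ ^ 2 + ((-3 : ℂ)/16) * eB ω t ^ 7 * (ω:ℂ)⁻¹ ^ 2 + ((-21 : ℂ)/16) * eA ω t ^ 1 * (ω:ℂ)⁻¹ ^ 2 + ((-3 : ℂ)/4) * eA ω t ^ 1 * eB ω t ^ 2 * (ω:ℂ)⁻¹ ^ 2 + ((-3 : ℂ)/16) * eA ω t ^ 1 * eB ω t ^ 4 * (ω:ℂ)⁻¹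 ^ 2 + ((-21 : ℂ)/16) * eA ω t ^ 2 * eB ω t ^ 1 * (ω:ℂ)⁻¹ ^ 2 + ((-3 : ℂ)/4) * eA ω t ^ 2 * eB ω t ^ 3 * (ω:ℂ)⁻¹ ^ 2 + ((-3 : ℂ)/16) * eA ω t ^ 2 * eB ω t ^ 5 * (ω:ℂ)⁻¹ ^ 2) * hab + (((-7 : ℂ)/4) * eB ω t ^ 1 * (ω:ℂ)⁻¹ ^ 2 + ((5 : ℂ)/16) * eB ω t ^ 3 * (ω:ℂ)⁻¹ ^ 2 + ((7 : ℂ)/8) * eB ω t ^ 5 * (ω:ℂ)⁻¹ ^ 2 + ((3 : ℂ)/16) * eB ω t ^ 7 * (ω:ℂ)⁻¹ ^ 2 + ((-3 : ℂ)/16) * eA ω t ^ 1 * (ω:ℂ)⁻¹ ^ 2 + ((-9 : ℂ)/8) * eA ω t ^ 3 * (ω:ℂ)⁻¹ ^ 2 + ((27 : ℂ)/16) * eA ω t ^ 5 * (ω:ℂ)⁻¹ ^ 2) * hw + (((7 : ℂ)/4) * eB ω t ^ 1 * (ω:ℂ) ^ 1 * (ω:ℂ)⁻¹ ^ 3 +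 ((-5 : ℂ)/16) * eB ω t ^ 3 * (ω:ℂ) ^ 1 * (ω:ℂ)⁻¹ ^ 3 + ((-7 : ℂ)/8) * eB ω t ^ 5 * (ω:ℂ) ^ 1 * (ω:ℂ)⁻¹ ^ 3 + ((-3 : ℂ)/16) * eB ω t ^ 7 * (ω:ℂ) ^ 1 * (ω:ℂ)⁻¹ ^ 3 + ((3 : ℂ)/16) * eA ω t ^ 1 * (ω:ℂ) ^ 1 * (ω:ℂ)⁻¹ ^ 3 + ((9 : ℂ)/8) * eA ω t ^ 3 * (ω:ℂ) ^ 1 * (ω:ℂ)⁻¹ ^ 3 + ((-27 : ℂ)/16) * eA ω t ^ 5 * (ω:ℂ) ^ 1 * (ω:ℂ)⁻¹ ^ 3) * hI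
  have hi : IntervalIntegrable (fun t : ℝ => eA ω t * FC ω t * H2 ω t) volume 0 x :=
    (cont_LK ω).intervalIntegrable 0 x
  rw [intervalIntegral.integral_eq_sub_of_hasDerivAt hd hi, Kf_zero ω, sub_zero]

lemma cont_LIII (ω : ℝ) : Continuous (fun t : ℝ => eB ω t * FC ω t * H3 ω t) := by
  unfold FC H3 eA eB
  fun_prop

lemma LIII (ω : ℝ) (hω : ω ≠ 0) (x : ℝ) :
    ∫ t in (0:ℝ)..x, eB ω t * FC ω t * H3 ω t = PhiIII ω x := by
  have hωC : (ω:ℂ) ≠ 0 := Complex.ofReal_ne_zero.mpr hω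
  have hd : ∀ t ∈ Set.uIcc (0:ℝ) x, HasDerivAt (PhiIII ω) ((fun t => eB ω t * FC ω t * H3 ω t) t) t := by
    intro t _
    convert PhiIII_hasDeriv ω t using 1
    have hab : eA ω t * eB ω t = 1 := by
      rw [eA, eB, ← Complex.exp_add]; simp
    have hw : (ω:ℂ) * (ω:ℂ)⁻¹ = 1 := mul_inv_cancel₀ hωC
    have hI : I * I = -1 := Complex.I_mul_I
    simp only [FC, H3]
    push_cast
    linear_combination (((-3 : ℂ)/2) * eB ω t ^ 1 * (ω:ℂ)⁻¹ ^ 2 + ((-9 : ℂ)/32) * eB ω t ^ 3 * (ω:ℂ)⁻¹ ^ 2 + ((-3 : ℂ)/4) * I * eA ω t ^ 1 * (ω:ℂ)⁻¹ ^ 1 * (t:ℂ) + ((57 : ℂ)/32) * eA ω t ^ 1 * (ω:ℂ)⁻¹ ^ 2 + ((-3 : ℂ)/2) * eA ω t ^ 1 * eB ω t ^ 2 * (ω:ℂ)⁻¹ ^ 2 + ((-9 : ℂ)/32) * eA ω t ^ 1 * eB ω t ^ 4 * (ω:ℂ)⁻¹ ^ 2 + ((-27 : ℂ)/32) * eA ω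 t ^ 2 * eB ω t ^ 1 * (ω:ℂ)⁻¹ ^ 2 + ((-9 : ℂ)/16) * eA ω t ^ 3 * (ω:ℂ)⁻¹ ^ 2 + ((-27 : ℂ)/32) * eA ω t ^ 3 * eB ω t ^ 2 * (ω:ℂ)⁻¹ ^ 2 + ((-27 : ℂ)/32) * eA ω t ^ 5 * (ω:ℂ)⁻¹ ^ 2) * hab + (((1 : ℂ)/2) * I * eB ω t ^ 1 * (ω:ℂ)⁻¹ ^ 1 * (t:ℂ) + ((1 : ℂ)/4) * eB ω t ^ 1 * (ω:ℂ)⁻¹ ^ 2 + ((3 : ℂ)/4) * I * eB ω t ^ 3 * (ω:ℂ)⁻¹ ^ 1 * (t:ℂ) + ((-35 : ℂ)/32) * eB ω t ^ 3 * (ω:ℂ)⁻¹ ^ 2 + ((27 : ℂ)/16) * eB ω t ^ 5 * (ω:ℂ)⁻¹ ^ 2 + ((9 : ℂ)/32) * eB ω t ^ 7 * (ω:ℂ)⁻¹ ^ 2 + ((3 : ℂ)/4) * I * eA ω t ^ 1 * (ω:ℂ)⁻¹ ^ 1 * (t:ℂ) + ((-81 : ℂ)/32) * eA ω t ^ 1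 * (ω:ℂ)⁻¹ ^ 2 + ((9 : ℂ)/16) * eA ω t ^ 3 * (ω:ℂ)⁻¹ ^ 2 + ((27 : ℂ)/32) * eA ω t ^ 5 * (ω:ℂ)⁻¹ ^ 2) * hw + (((-1 : ℂ)/4) * eB ω t ^ 1 * (ω:ℂ) ^ 1 * (ω:ℂ)⁻¹ ^ 3 + ((35 : ℂ)/32) * eB ω t ^ 3 * (ω:ℂ) ^ 1 * (ω:ℂ)⁻¹ ^ 3 + ((-27 : ℂ)/16) * eB ω t ^ 5 * (ω:ℂ) ^ 1 * (ω:ℂ)⁻¹ ^ 3 + ((-9 : ℂ)/32) * eB ω t ^ 7 * (ω:ℂ) ^ 1 * (ω:ℂ)⁻¹ ^ 3 + ((81 : ℂ)/32) * eA ω t ^ 1 * (ω:ℂ) ^ 1 * (ω:ℂ)⁻¹ ^ 3 + ((-9 : ℂ)/16) * eA ω t ^ 3 * (ω:ℂ) ^ 1 * (ω:ℂ)⁻¹ ^ 3 + ((-27 : ℂ)/32) * eA ω t ^ 5 * (ω:ℂ) ^ 1 * (ω:ℂ)⁻¹ ^ 3) * hI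
  have hi : IntervalIntegrable (fun t : ℝ => eB ω t * FC ω t * H3 ω t) volume 0 x :=
    (cont_LIII ω).intervalIntegrable 0 x
  rw [intervalIntegral.integral_eq_sub_of_hasDerivAt hd hi, PhiIII_zero ω, sub_zero]

lemma cont_LIV (ω : ℝ) : Continuous (fun t : ℝ => eB ω t * FC ω t * Kf ω t) := by
  unfold FC Kf eA eB
  fun_prop

lemma LIV (ω : ℝ) (hω : ω ≠ 0) (x : ℝ) :
    ∫ t in (0:ℝ)..x, eB ω t * FC ω t * Kf ω t = PhiIV ω x := by
  have hωC : (ω:ℂ) ≠ 0 := Complex.ofReal_ne_zero.mpr hω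
  have hd : ∀ t ∈ Set.uIcc (0:ℝ) x, HasDerivAt (PhiIV ω) ((fun t => eB ω t * FC ω t * Kf ω t) t) t := by
    intro t _
    convert PhiIV_hasDeriv ω t using 1
    have hab : eA ω t * eB ω t = 1 := by
      rw [eA, eB, ← Complex.exp_add]; simp
    have hw : (ω:ℂ) * (ω:ℂ)⁻¹ = 1 := mul_inv_cancel₀ hωC
    have hI : I * I = -1 := Complex.I_mul_I
    simp only [FC, Kf]
    push_cast
    linear_combination (((15 : ℂ)/8) * I * (ω:ℂ)⁻¹ ^ 3 + ((-7 : ℂ)/16) * I * eB ω t ^ 2 * (ω:ℂ)⁻¹ ^ 3 + ((-21 : ℂ)/80) * I * eB ω t ^ 4 * (ω:ℂ)⁻¹ ^ 3 + ((-9 : ℂ)/224) * I * eB ω t ^ 6 * (ω:ℂ)⁻¹ ^ 3 + ((-64 : ℂ)/35) * I * eA ω t ^ 1 * (ω:ℂ)⁻¹ ^ 3 + ((33 : ℂ)/16) * I * eA ω t ^ 1 * eB ω t ^ 1 * (ω:ℂ)⁻¹ ^ 3 + ((-5 : ℂ)/32) * I * eA ω t ^ 1 * eB ω t ^ 3 *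 (ω:ℂ)⁻¹ ^ 3 + ((-21 : ℂ)/80) * I * eA ω t ^ 1 * eB ω t ^ 5 * (ω:ℂ)⁻¹ ^ 3 + ((-9 : ℂ)/224) * I * eA ω t ^ 1 * eB ω t ^ 7 * (ω:ℂ)⁻¹ ^ 3 + ((-3 : ℂ)/20) * I * eA ω t ^ 2 * (ω:ℂ)⁻¹ ^ 3 + ((-9 : ℂ)/16) * I * eA ω t ^ 2 * eB ω t ^ 2 * (ω:ℂ)⁻¹ ^ 3 + ((81 : ℂ)/160) * I * eA ω t ^ 3 * eB ω t ^ 1 * (ω:ℂ)⁻¹ ^ 3 + ((-9 : ℂ)/40) * I * eA ω t ^ 4 * (ω:ℂ)⁻¹ ^ 3 + ((81 : ℂ)/160) * I * eA ω t ^ 4 * eB ω t ^ 2 * (ω:ℂ)⁻¹ ^ 3 + ((81 : ℂ)/160) * I * eA ω t ^ 6 * (ω:ℂ)⁻¹ ^ 3) * hab + (((128 : ℂ)/105) * I * eB ω t ^ 1 * (ω:ℂ)⁻¹ ^ 3 + ((-21 : ℂ)/16) * I * eB ω t ^ 2 * (ω:ℂ)⁻¹ ^ 3 + ((64 : ℂ)/35)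 * I * eB ω t ^ 3 * (ω:ℂ)⁻¹ ^ 3 + ((-271 : ℂ)/120) * I * eB ω t ^ 4 * (ω:ℂ)⁻¹ ^ 3 + ((13 : ℂ)/35) * I * eB ω t ^ 6 * (ω:ℂ)⁻¹ ^ 3 + ((81 : ℂ)/280) * I * eB ω t ^ 8 * (ω:ℂ)⁻¹ ^ 3 + ((9 : ℂ)/224) * I * eB ω t ^ 10 * (ω:ℂ)⁻¹ ^ 3 + ((64 : ℂ)/35) * I * eA ω t ^ 1 * (ω:ℂ)⁻¹ ^ 3 + ((3 : ℂ)/20) * I * eA ω t ^ 2 * (ω:ℂ)⁻¹ ^ 3 + ((9 : ℂ)/40) * I * eA ω t ^ 4 * (ω:ℂ)⁻¹ ^ 3 + ((-81 : ℂ)/160) * I * eA ω t ^ 6 * (ω:ℂ)⁻¹ ^ 3) * hw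
  have hi : IntervalIntegrable (fun t : ℝ => eB ω t * FC ω t * Kf ω t) volume 0 x :=
    (cont_LIV ω).intervalIntegrable 0 x
  rw [intervalIntegral.integral_eq_sub_of_hasDerivAt hd hi, PhiIV_zero ω, sub_zero]

lemma II_of_eqOn {q g : ℝ → ℂ} {a b : ℝ} (hg : Continuous g)
    (h : ∀ t ∈ Set.uIoc a b, q t = g t) : IntervalIntegrable q volume a b :=
  (hg.intervalIntegrable a b).congr_ae <|
    (MeasureTheory.ae_restrict_iff' measurableSet_uIoc).mpr
      (Filter.Eventually.of_forall fun t ht => (h t ht).symm)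

lemma integral_eq_of_eqOn {q g : ℝ → ℂ} {a b : ℝ} (h : ∀ t ∈ Set.uIoc a b, q t = g t) :
    ∫ t in a..b, q t = ∫ t in a..b, g t :=
  intervalIntegral.integral_congr_ae (Filter.Eventually.of_forall h)

lemma eA_tau (ω : ℝ) (hω : ω ≠ 0) : eA ω (2 * π / |ω|) = 1 := by
  have hωC : (ω:ℂ) ≠ 0 := Complex.ofReal_ne_zero.mpr hω
  rcases hω.lt_or_gt with h | h
  · rw [abs_of_neg h, eA,
      show I * (ω:ℂ) * ((2 * π / (-ω) : ℝ) : ℂ) = -(2 * π * I) by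
        push_cast; linear_combination (-(2 * (π:ℂ) * I)) * mul_inv_cancel₀ hωC]
    rw [Complex.exp_neg, Complex.exp_two_pi_mul_I, inv_one]
  · rw [abs_of_pos h, eA,
      show I * (ω:ℂ) * ((2 * π / ω : ℝ) : ℂ) = 2 * π * I by
        push_cast; linear_combination (2 * (π:ℂ) * I) * mul_inv_cancel₀ hωC]
    exact Complex.exp_two_pi_mul_I

lemma eB_tau (ω : ℝ) (hω : ω ≠ 0) : eB ω (2 * π / |ω|) = 1 := by
  rw [eB_eq_inv, eA_tau ω hω, inv_one]

lemma cond1 (ω T : ℝ) (hω : ω ≠ 0) (hT : 2 * π / |ω| ≤ T) (f : ℝ → ℝ)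
    (hf1 : ∀ t, t ≤ 2 * π / |ω| → ((f t : ℝ) : ℂ) = FC ω t)
    (hf0 : ∀ t, 2 * π / |ω| < t → f t = 0) :
    (∫ t in (0:ℝ)..T, Complex.exp (-I * ω * t) * (f t)) = 0 := by
  have hωC : (ω:ℂ) ≠ 0 := Complex.ofReal_ne_zero.mpr hω
  have hτ0 : (0:ℝ) ≤ 2 * π / |ω| := le_of_lt (div_pos Real.two_pi_pos (abs_pos.mpr hω))
  have hτT : 2 * π / |ω| ≤ T := hT
  have hA1 : eA ω (2 * π / |ω|) = 1 := eA_tau ω hω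
  have hB1 : eB ω (2 * π / |ω|) = 1 := eB_tau ω hω
  have key1 : ∀ t ∈ Set.uIoc (0:ℝ) (2 * π / |ω|),
      Complex.exp (-I * ω * t) * ((f t : ℝ) : ℂ) = eB ω t * FC ω t := by
    intro t ht
    rw [Set.uIoc_of_le hτ0] at ht
    rw [hf1 t ht.2, eB, show -I * (ω:ℂ) * (t:ℂ) = -(I * (ω:ℂ) * (t:ℂ)) by ring]
  have key2 : ∀ t ∈ Set.uIoc (2 * π / |ω|) T,
      Complex.exp (-I * ω * t) * ((f t : ℝ) : ℂ) = (fun _ : ℝ => (0:ℂ)) t := by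
    intro t ht
    rw [Set.uIoc_of_le hτT] at ht
    rw [hf0 t ht.1]
    simp
  rw [← intervalIntegral.integral_add_adjacent_intervals
      (II_of_eqOn (cont_LG ω) key1) (II_of_eqOn continuous_const key2),
    integral_eq_of_eqOn key1, integral_eq_of_eqOn key2,
    LG ω hω, Gf_eval ω _ hA1 hB1]
  simp

lemma cond2 (ω T : ℝ) (hω : ω ≠ 0) (hT : 2 * π / |ω| ≤ T) (f : ℝ → ℝ)
    (hf1 : ∀ t, t ≤ 2 * π / |ω| → ((f t : ℝ) : ℂ) = FC ω t)
    (hf0 : ∀ t, 2 * π / |ω| < t → f t = 0) :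
    (∫ t₁ in (0:ℝ)..T, ∫ t₂ in (0:ℝ)..t₁, ∫ t₃ in (0:ℝ)..t₂,
        Complex.exp (I * ω * (t₁ - t₂ - t₃)) * (f t₁) * (f t₂) * (f t₃)) = 0 := by
  have hωC : (ω:ℂ) ≠ 0 := Complex.ofReal_ne_zero.mpr hω
  have hτ0 : (0:ℝ) ≤ 2 * π / |ω| := le_of_lt (div_pos Real.two_pi_pos (abs_pos.mpr hω))
  have hτT : 2 * π / |ω| ≤ T := hT
  have hA1 : eA ω (2 * π / |ω|) = 1 := eA_tau ω hω
  have hB1 : eB ω (2 * π / |ω|) = 1 := eB_tau ω hω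
  have key1 : ∀ t₁ ∈ Set.uIoc (0:ℝ) (2 * π / |ω|),
      (∫ t₂ in (0:ℝ)..t₁, ∫ t₃ in (0:ℝ)..t₂,
        Complex.exp (I * ω * (t₁ - t₂ - t₃)) * (f t₁) * (f t₂) * (f t₃))
      = eA ω t₁ * FC ω t₁ * H2 ω t₁ := by
    intro t₁ ht₁
    rw [Set.uIoc_of_le hτ0] at ht₁
    have key2 : ∀ t₂ ∈ Set.uIoc (0:ℝ) t₁,
        (∫ t₃ in (0:ℝ)..t₂,
          Complex.exp (I * ω * (t₁ - t₂ - t₃)) * (f t₁) * (f t₂) * (f t₃))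
        = (eA ω t₁ * FC ω t₁) * (eB ω t₂ * FC ω t₂ * Gf ω t₂) := by
      intro t₂ ht₂
      rw [Set.uIoc_of_le ht₁.1.le] at ht₂
      have ht₂τ : t₂ ≤ 2 * π / |ω| := ht₂.2.trans ht₁.2
      have key3 : ∀ t₃ ∈ Set.uIoc (0:ℝ) t₂,
          Complex.exp (I * ω * (t₁ - t₂ - t₃)) * ((f t₁ : ℝ) : ℂ) * (f t₂) * (f t₃)
          = (eA ω t₁ * FC ω t₁ * (eB ω t₂ * FC ω t₂)) * (eB ω t₃ * FC ω t₃) := by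
        intro t₃ ht₃
        rw [Set.uIoc_of_le ht₂.1.le] at ht₃
        rw [hf1 t₁ ht₁.2, hf1 t₂ ht₂τ, hf1 t₃ (ht₃.2.trans ht₂τ),
          show I * (ω:ℂ) * ((t₁:ℂ) - (t₂:ℂ) - (t₃:ℂ))
            = (I * (ω:ℂ) * (t₁:ℂ)) + (-(I * (ω:ℂ) * (t₂:ℂ)) + -(I * (ω:ℂ) * (t₃:ℂ))) by ring,
          Complex.exp_add, Complex.exp_add]
        simp only [eA, eB]
        ring
      rw [integral_eq_of_eqOn key3, intervalIntegral.integral_const_mul, LG ω hω]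
      ring
    rw [integral_eq_of_eqOn key2, intervalIntegral.integral_const_mul, LH2 ω hω]
  have key0 : ∀ t₁ ∈ Set.uIoc (2 * π / |ω|) T,
      (∫ t₂ in (0:ℝ)..t₁, ∫ t₃ in (0:ℝ)..t₂,
        Complex.exp (I * ω * (t₁ - t₂ - t₃)) * (f t₁) * (f t₂) * (f t₃))
      = (fun _ : ℝ => (0:ℂ)) t₁ := by
    intro t₁ ht₁
    rw [Set.uIoc_of_le hτT] at ht₁
    have h0 : ((f t₁ : ℝ) : ℂ) = 0 := by rw [hf0 t₁ ht₁.1]; simp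
    simp [h0]
  rw [← intervalIntegral.integral_add_adjacent_intervals
      (II_of_eqOn (cont_LK ω) key1) (II_of_eqOn continuous_const key0),
    integral_eq_of_eqOn key1, integral_eq_of_eqOn key0,
    LK ω hω, Kf_eval ω _ hA1 hB1]
  simp

lemma cond3 (ω T : ℝ) (hω : ω ≠ 0) (hT : 2 * π / |ω| ≤ T) (f : ℝ → ℝ)
    (hf1 : ∀ t, t ≤ 2 * π / |ω| → ((f t : ℝ) : ℂ) = FC ω t)
    (hf0 : ∀ t, 2 * π / |ω| < t → f t = 0) :
    (∫ t₁ in (0:ℝ)..T, ∫ t₂ in (0:ℝ)..t₁, ∫ t₃ in (0:ℝ)..t₂,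
        Complex.exp (I * ω * (-t₁ + t₂ - t₃)) * (f t₁) * (f t₂) * (f t₃)) = 0 := by
  have hωC : (ω:ℂ) ≠ 0 := Complex.ofReal_ne_zero.mpr hω
  have hτ0 : (0:ℝ) ≤ 2 * π / |ω| := le_of_lt (div_pos Real.two_pi_pos (abs_pos.mpr hω))
  have hτT : 2 * π / |ω| ≤ T := hT
  have hA1 : eA ω (2 * π / |ω|) = 1 := eA_tau ω hω
  have hB1 : eB ω (2 * π / |ω|) = 1 := eB_tau ω hω
  have key1 : ∀ t₁ ∈ Set.uIoc (0:ℝ) (2 * π / |ω|),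
      (∫ t₂ in (0:ℝ)..t₁, ∫ t₃ in (0:ℝ)..t₂,
        Complex.exp (I * ω * (-t₁ + t₂ - t₃)) * (f t₁) * (f t₂) * (f t₃))
      = eB ω t₁ * FC ω t₁ * H3 ω t₁ := by
    intro t₁ ht₁
    rw [Set.uIoc_of_le hτ0] at ht₁
    have key2 : ∀ t₂ ∈ Set.uIoc (0:ℝ) t₁,
        (∫ t₃ in (0:ℝ)..t₂,
          Complex.exp (I * ω * (-t₁ + t₂ - t₃)) * (f t₁) * (f t₂) * (f t₃))
        = (eB ω t₁ * FC ω t₁) * (eA ω t₂ * FC ω t₂ * Gf ω t₂) := by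
      intro t₂ ht₂
      rw [Set.uIoc_of_le ht₁.1.le] at ht₂
      have ht₂τ : t₂ ≤ 2 * π / |ω| := ht₂.2.trans ht₁.2
      have key3 : ∀ t₃ ∈ Set.uIoc (0:ℝ) t₂,
          Complex.exp (I * ω * (-t₁ + t₂ - t₃)) * ((f t₁ : ℝ) : ℂ) * (f t₂) * (f t₃)
          = (eB ω t₁ * FC ω t₁ * (eA ω t₂ * FC ω t₂)) * (eB ω t₃ * FC ω t₃) := by
        intro t₃ ht₃
        rw [Set.uIoc_of_le ht₂.1.le] at ht₃
        rw [hf1 t₁ ht₁.2, hf1 t₂ ht₂τ, hf1 t₃ (ht₃.2.trans ht₂τ),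
          show I * (ω:ℂ) * (-(t₁:ℂ) + (t₂:ℂ) - (t₃:ℂ))
            = (-(I * (ω:ℂ) * (t₁:ℂ))) + ((I * (ω:ℂ) * (t₂:ℂ)) + -(I * (ω:ℂ) * (t₃:ℂ))) by ring,
          Complex.exp_add, Complex.exp_add]
        simp only [eA, eB]
        ring
      rw [integral_eq_of_eqOn key3, intervalIntegral.integral_const_mul, LG ω hω]
      ring
    rw [integral_eq_of_eqOn key2, intervalIntegral.integral_const_mul, LH3 ω hω]
  have key0 : ∀ t₁ ∈ Set.uIoc (2 * π / |ω|) T,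
      (∫ t₂ in (0:ℝ)..t₁, ∫ t₃ in (0:ℝ)..t₂,
        Complex.exp (I * ω * (-t₁ + t₂ - t₃)) * (f t₁) * (f t₂) * (f t₃))
      = (fun _ : ℝ => (0:ℂ)) t₁ := by
    intro t₁ ht₁
    rw [Set.uIoc_of_le hτT] at ht₁
    have h0 : ((f t₁ : ℝ) : ℂ) = 0 := by rw [hf0 t₁ ht₁.1]; simp
    simp [h0]
  rw [← intervalIntegral.integral_add_adjacent_intervals
      (II_of_eqOn (cont_LIII ω) key1) (II_of_eqOn continuous_const key0),
    integral_eq_of_eqOn key1, integral_eq_of_eqOn key0,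
    LIII ω hω, PhiIII_eval ω _ hA1 hB1]
  simp

lemma cond4 (ω T : ℝ) (hω : ω ≠ 0) (hT : 2 * π / |ω| ≤ T) (f : ℝ → ℝ)
    (hf1 : ∀ t, t ≤ 2 * π / |ω| → ((f t : ℝ) : ℂ) = FC ω t)
    (hf0 : ∀ t, 2 * π / |ω| < t → f t = 0) :
    (∫ t₁ in (0:ℝ)..T, ∫ t₂ in (0:ℝ)..t₁, ∫ t₃ in (0:ℝ)..t₂, ∫ t₄ in (0:ℝ)..t₃,
        Complex.exp (I * ω * (-t₁ + t₂ - t₃ - t₄)) * (f t₁) * (f t₂) * (f t₃) * (f t₄))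
      = ((15:ℂ)/8) * I * ((2 * π / |ω| : ℝ) : ℂ) * (ω:ℂ)⁻¹ ^ 3 := by
  have hωC : (ω:ℂ) ≠ 0 := Complex.ofReal_ne_zero.mpr hω
  have hτ0 : (0:ℝ) ≤ 2 * π / |ω| := le_of_lt (div_pos Real.two_pi_pos (abs_pos.mpr hω))
  have hτT : 2 * π / |ω| ≤ T := hT
  have hA1 : eA ω (2 * π / |ω|) = 1 := eA_tau ω hω
  have hB1 : eB ω (2 * π / |ω|) = 1 := eB_tau ω hω
  have key1 : ∀ t₁ ∈ Set.uIoc (0:ℝ) (2 * π / |ω|),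
      (∫ t₂ in (0:ℝ)..t₁, ∫ t₃ in (0:ℝ)..t₂, ∫ t₄ in (0:ℝ)..t₃,
        Complex.exp (I * ω * (-t₁ + t₂ - t₃ - t₄)) * (f t₁) * (f t₂) * (f t₃) * (f t₄))
      = eB ω t₁ * FC ω t₁ * Kf ω t₁ := by
    intro t₁ ht₁
    rw [Set.uIoc_of_le hτ0] at ht₁
    have key2 : ∀ t₂ ∈ Set.uIoc (0:ℝ) t₁,
        (∫ t₃ in (0:ℝ)..t₂, ∫ t₄ in (0:ℝ)..t₃,
          Complex.exp (I * ω * (-t₁ + t₂ - t₃ - t₄)) * (f t₁) * (f t₂) * (f t₃) * (f t₄))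
        = (eB ω t₁ * FC ω t₁) * (eA ω t₂ * FC ω t₂ * H2 ω t₂) := by
      intro t₂ ht₂
      rw [Set.uIoc_of_le ht₁.1.le] at ht₂
      have ht₂τ : t₂ ≤ 2 * π / |ω| := ht₂.2.trans ht₁.2
      have key3 : ∀ t₃ ∈ Set.uIoc (0:ℝ) t₂,
          (∫ t₄ in (0:ℝ)..t₃,
            Complex.exp (I * ω * (-t₁ + t₂ - t₃ - t₄)) * (f t₁) * (f t₂) * (f t₃) * (f t₄))
          = (eB ω t₁ * FC ω t₁ * (eA ω t₂ * FC ω t₂)) * (eB ω t₃ * FC ω t₃ * Gf ω t₃) := by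
        intro t₃ ht₃
        rw [Set.uIoc_of_le ht₂.1.le] at ht₃
        have ht₃τ : t₃ ≤ 2 * π / |ω| := ht₃.2.trans ht₂τ
        have key4 : ∀ t₄ ∈ Set.uIoc (0:ℝ) t₃,
            Complex.exp (I * ω * (-t₁ + t₂ - t₃ - t₄)) * ((f t₁ : ℝ) : ℂ) * (f t₂) * (f t₃) * (f t₄)
            = (eB ω t₁ * FC ω t₁ * (eA ω t₂ * FC ω t₂) * (eB ω t₃ * FC ω t₃))
              * (eB ω t₄ * FC ω t₄) := by
          intro t₄ ht₄
          rw [Set.uIoc_of_le ht₃.1.le] at ht₄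
          rw [hf1 t₁ ht₁.2, hf1 t₂ ht₂τ, hf1 t₃ ht₃τ, hf1 t₄ (ht₄.2.trans ht₃τ),
            show I * (ω:ℂ) * (-(t₁:ℂ) + (t₂:ℂ) - (t₃:ℂ) - (t₄:ℂ))
              = (-(I * (ω:ℂ) * (t₁:ℂ))) + ((I * (ω:ℂ) * (t₂:ℂ))
                + (-(I * (ω:ℂ) * (t₃:ℂ)) + -(I * (ω:ℂ) * (t₄:ℂ)))) by ring,
            Complex.exp_add, Complex.exp_add, Complex.exp_add]
          simp only [eA, eB]
          ring
        rw [integral_eq_of_eqOn key4, intervalIntegral.integral_const_mul, LG ω hω]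
        ring
      rw [integral_eq_of_eqOn key3, intervalIntegral.integral_const_mul, LH2 ω hω]
      ring
    rw [integral_eq_of_eqOn key2, intervalIntegral.integral_const_mul, LK ω hω]
  have key0 : ∀ t₁ ∈ Set.uIoc (2 * π / |ω|) T,
      (∫ t₂ in (0:ℝ)..t₁, ∫ t₃ in (0:ℝ)..t₂, ∫ t₄ in (0:ℝ)..t₃,
        Complex.exp (I * ω * (-t₁ + t₂ - t₃ - t₄)) * (f t₁) * (f t₂) * (f t₃) * (f t₄))
      = (fun _ : ℝ => (0:ℂ)) t₁ := by
    intro t₁ ht₁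
    rw [Set.uIoc_of_le hτT] at ht₁
    have h0 : ((f t₁ : ℝ) : ℂ) = 0 := by rw [hf0 t₁ ht₁.1]; simp
    simp [h0]
  rw [← intervalIntegral.integral_add_adjacent_intervals
      (II_of_eqOn (cont_LIV ω) key1) (II_of_eqOn continuous_const key0),
    integral_eq_of_eqOn key1, integral_eq_of_eqOn key0,
    LIV ω hω, PhiIV_eval ω _ hA1 hB1]
  simp

theorem stmt_19 (ω T : ℝ) (hω : ω ≠ 0) (hT : 2 * π / |ω| ≤ T) :
    ∃ f : ℝ → ℝ, f ≠ 0 ∧ MemLp f 2 (volume.restrict (Set.Icc 0 T)) ∧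
      (∫ t in (0:ℝ)..T, Complex.exp (-I * ω * t) * (f t)) = 0 ∧
      (∫ t₁ in (0:ℝ)..T, ∫ t₂ in (0:ℝ)..t₁, ∫ t₃ in (0:ℝ)..t₂,
          Complex.exp (I * ω * (t₁ - t₂ - t₃)) * (f t₁) * (f t₂) * (f t₃)) = 0 ∧
      (∫ t₁ in (0:ℝ)..T, ∫ t₂ in (0:ℝ)..t₁, ∫ t₃ in (0:ℝ)..t₂,
          Complex.exp (I * ω * (-t₁ + t₂ - t₃)) * (f t₁) * (f t₂) * (f t₃)) = 0 ∧
      (∫ t₁ in (0:ℝ)..T, ∫ t₂ in (0:ℝ)..t₁, ∫ t₃ in (0:ℝ)..t₂, ∫ t₄ in (0:ℝ)..t₃,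
          Complex.exp (I * ω * (-t₁ + t₂ - t₃ - t₄)) * (f t₁) * (f t₂) * (f t₃) * (f t₄)) ≠ 0 := by
  have hτpos : (0:ℝ) < 2 * π / |ω| := div_pos Real.two_pi_pos (abs_pos.mpr hω)
  set f : ℝ → ℝ := fun t => if t ≤ 2 * π / |ω| then 1 + 3 * Real.cos (2 * ω * t) else 0 with hfdef
  have hf1 : ∀ t, t ≤ 2 * π / |ω| → ((f t : ℝ) : ℂ) = FC ω t := by
    intro t ht
    rw [hfdef]
    simp only [if_pos ht]
    rw [FC, Complex.ofReal_add, Complex.ofReal_mul, Complex.ofReal_cos]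
    rw [show ((2 * ω * t : ℝ) : ℂ) = 2 * (ω:ℂ) * (t:ℂ) by push_cast; ring]
    rw [eA, eB, ← Complex.exp_nat_mul, ← Complex.exp_nat_mul]
    rw [show ((2:ℕ) : ℂ) * (I * (ω:ℂ) * (t:ℂ)) = (2 * (ω:ℂ) * (t:ℂ)) * I by push_cast; ring,
        show ((2:ℕ) : ℂ) * -(I * (ω:ℂ) * (t:ℂ)) = -(2 * (ω:ℂ) * (t:ℂ)) * I by push_cast; ring]
    have h2c := Complex.two_cos (x := 2 * (ω:ℂ) * (t:ℂ))
    push_cast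
    linear_combination ((3:ℂ)/2) * h2c
  have hf0 : ∀ t, 2 * π / |ω| < t → f t = 0 := by
    intro t ht
    rw [hfdef]
    simp only [if_neg (not_le.mpr ht)]
  refine ⟨f, ?_, ?_, cond1 ω T hω hT f hf1 hf0, cond2 ω T hω hT f hf1 hf0,
    cond3 ω T hω hT f hf1 hf0, ?_⟩
  · intro h
    have h0 := congrFun h 0
    rw [hfdef] at h0
    simp only [if_pos hτpos.le, mul_zero, Real.cos_zero, Pi.zero_apply] at h0
    norm_num at h0
  · have hfin : IsFiniteMeasure (volume.restrict (Set.Icc (0:ℝ) T)) := by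
      constructor
      rw [Measure.restrict_apply_univ, Real.volume_Icc]
      exact ENNReal.ofReal_lt_top
    have hmeas : AEStronglyMeasurable f (volume.restrict (Set.Icc (0:ℝ) T)) := by
      apply Measurable.aestronglyMeasurable
      apply Measurable.ite measurableSet_Iic ?_ measurable_const
      exact (by fun_prop : Continuous fun t : ℝ => 1 + 3 * Real.cos (2 * ω * t)).measurable
    apply MemLp.of_bound hmeas 4
    apply Filter.Eventually.of_forall
    intro t
    rw [hfdef]
    by_cases h : t ≤ 2 * π / |ω|
    · simp only [if_pos h, Real.norm_eq_abs]
      have h1 := Real.neg_one_le_cos (2 * ω * t)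
      have h2 := Real.cos_le_one (2 * ω * t)
      rw [abs_le]
      constructor <;> linarith
    · simp only [if_neg h, norm_zero]
      norm_num
  · rw [cond4 ω T hω hT f hf1 hf0]
    have hτne : ((2 * π / |ω| : ℝ) : ℂ) ≠ 0 := by
      exact_mod_cast Complex.ofReal_ne_zero.mpr hτpos.ne'
    have hωC : (ω:ℂ) ≠ 0 := Complex.ofReal_ne_zero.mpr hω
    simp only [ne_eq, mul_eq_zero, pow_eq_zero_iff, inv_eq_zero, not_or]
    refine ⟨⟨⟨by norm_num, Complex.I_ne_zero⟩, hτne⟩, ?_⟩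
    simp [hωC]
end
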